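/- arXiv:2506.14534 — 7 statements merged into one kernel-verified Lean document; each statement's English description precedes it below -/
import Mathlib

section
/- Let G^s be a summary causal graph over a finite set of time series V, and let π be a directed graph on the full-time vertex set V × ℤ. If π is acyclic, every edge of π respects time orientation (i.e., an edge from (A, s) to (B, s') requires s ≤ s'), and the reduction of π (the graph on V with an edge A → B whenever π has an edge from some (A, s) to some (B, s')) is a subgraph of G^s, then there exists a full-time causal graph G^f that is a candidate for G^s (its reduction equals G^s) and that contains π as a subgraph. -/
open Classical Relation

variable {α : Type*}

/-- Full-time vertices: a time series together with an integer time point. -/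
abbrev FullVert (V : Type) := V × ℤ

/-- A full-time causal graph: a DAG on `V × ℤ` whose edges respect time. -/
structure FTCG (V : Type) where
  E : FullVert V → FullVert V → Prop
  time_respecting : ∀ a b, E a b → a.2 ≤ b.2
  acyclic : ∀ v, ¬ Relation.TransGen E v v

/-- Reduction of a graph on `V × ℤ` to a graph on `V`. -/
def reduction {V : Type} (E : FullVert V → FullVert V → Prop) : V → V → Prop :=
  fun A B => ∃ s s', E (A, s) (B, s')

/-- A summary causal graph is a reduction of some FTCG. -/
def IsSCG {V : Type} (Gs : V → V → Prop) : Prop :=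
  ∃ G : FTCG V, reduction G.E = Gs

/-- A candidate FTCG for an SCG. -/
def Candidate {V : Type} (Gs : V → V → Prop) (G : FTCG V) : Prop :=
  reduction G.E = Gs

/-- Consistency through time: every edge is present identically at all time shifts. -/
def ConsistentThroughTime {V : Type} (E : FullVert V → FullVert V → Prop) : Prop :=
  ∀ (A B : V) (s s' d : ℤ), E (A, s) (B, s') → E (A, s + d) (B, s' + d)

/-- A (possibly undirected-traversal) path, as a nonempty duplicate-free list of vertices
consecutively adjacent in one direction or the other. -/
def IsPathList (E : α → α → Prop) (vs : List α) : Prop :=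
  vs ≠ [] ∧ vs.Nodup ∧ vs.Chain' (fun x y => E x y ∨ E y x)

/-- A directed path, as a list of vertices. -/
def IsDirPathList (E : α → α → Prop) (vs : List α) : Prop :=
  vs ≠ [] ∧ vs.Nodup ∧ vs.Chain' E

/-- Vertex at position `i` of the list is a collider on the path. -/
def IsCollider (E : α → α → Prop) (vs : List α) (i : ℕ) : Prop :=
  ∃ a b c, 1 ≤ i ∧ vs[i-1]? = some a ∧ vs[i]? = some b ∧
    vs[i+1]? = some c ∧ E a b ∧ E c b

/-- Descendant relation (reflexive). -/
def Desc (E : α → α → Prop) (a b : α) : Prop := Relation.ReflTransGen E a b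

/-- `Z` blocks a path: some non-collider on it is in `Z`, or some collider on it has no
descendant in `Z`. -/
def BlocksList (E : α → α → Prop) (Z : Set α) (vs : List α) : Prop :=
  (∃ i a, vs[i]? = some a ∧ ¬ IsCollider E vs i ∧ a ∈ Z) ∨
  (∃ i a, vs[i]? = some a ∧ IsCollider E vs i ∧ ∀ d, Desc E a d → d ∉ Z)

/-- A proper path from `X` to `Y`: only its first vertex lies in `X`. -/
def ProperPathFromTo (E : α → α → Prop) (X Y : Set α) (vs : List α) : Prop :=
  IsPathList E vs ∧ (∃ a ∈ X, vs.head? = some a) ∧ (∃ b ∈ Y, vs.getLast? = some b) ∧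
  ∀ i a, vs[i]? = some a → a ∈ X → i = 0

/-- Forbidden set: descendants of vertices `W ∉ X` lying on proper causal paths from `X` to `Y`. -/
def Forb (E : α → α → Prop) (X Y : Set α) : Set α :=
  { d | ∃ w vs, ProperPathFromTo E X Y vs ∧ vs.Chain' E ∧ w ∈ vs ∧ w ∉ X ∧ Desc E w d }

/-- The adjustment criterion in a DAG. -/
def AdjustmentCriterion (E : α → α → Prop) (X Y Z : Set α) : Prop :=
  Z ∩ Forb E X Y = ∅ ∧
  ∀ vs, ProperPathFromTo E X Y vs → ¬ vs.Chain' E → BlocksList E Z vs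

/-- The common adjustment criterion relative to an SCG. -/
def CommonAdjustment {V : Type} (Gs : V → V → Prop) (X Y Z : Set (FullVert V)) : Prop :=
  ∀ G : FTCG V, Candidate Gs G → AdjustmentCriterion G.E X Y Z

/-- The common forbidden set. -/
def CF {V : Type} (Gs : V → V → Prop) (Xf : Set (FullVert V)) (Yt : FullVert V) :
    Set (FullVert V) :=
  { d | ∃ G : FTCG V, Candidate Gs G ∧ d ∈ Forb G.E Xf {Yt} }

/-- The non-conditionable set. -/
def NCset {V : Type} (Gs : V → V → Prop) (Xf : Set (FullVert V)) (Yt : FullVert V) :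
    Set (FullVert V) :=
  CF Gs Xf Yt \ Xf

/-- Extended time: `ℤ` with `+∞` and `-∞`. -/
abbrev ETime := WithBot (WithTop ℤ)

def toETime (n : ℤ) : ETime := ((n : WithTop ℤ) : ETime)

/-- First time at which a time series enters `NC` (`+∞` if never). -/
noncomputable def tNC {V : Type} (Gs : V → V → Prop) (Xf : Set (FullVert V))
    (Yt : FullVert V) (Z : V) : ETime :=
  sInf { s | ∃ n : ℤ, s = toETime n ∧ (Z, n) ∈ NCset Gs Xf Yt }

/-- Directed path (at least one edge) all of whose vertices stay in `S`. -/
def DirPathWithin (E : α → α → Prop) (S : Set α) (a b : α) : Prop :=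
  Relation.TransGen (fun x y => E x y ∧ x ∈ S ∧ y ∈ S) a b

/-- `F` is `Vtv`-NC-accessible. -/
def NCAccessible {V : Type} (Gs : V → V → Prop) (Xf : Set (FullVert V))
    (Yt Vtv F : FullVert V) : Prop :=
  F ≠ Vtv ∧ ∃ G : FTCG V, Candidate Gs G ∧
    DirPathWithin G.E (NCset Gs Xf Yt ∪ {Vtv}) F Vtv

/-- `F` is `Vtv`-NC-accessible via a consistent-through-time candidate. -/
def NCAccessibleC {V : Type} (Gs : V → V → Prop) (Xf : Set (FullVert V))
    (Yt Vtv F : FullVert V) : Prop :=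
  F ≠ Vtv ∧ ∃ G : FTCG V, Candidate Gs G ∧ ConsistentThroughTime G.E ∧
    DirPathWithin G.E (NCset Gs Xf Yt ∪ {Vtv}) F Vtv

/-- Latest time at which the time series `F` is `Vtv`-NC-accessible (`-∞` if never). -/
noncomputable def tAcc {V : Type} (Gs : V → V → Prop) (Xf : Set (FullVert V))
    (Yt Vtv : FullVert V) (F : V) : ETime :=
  sSup { s | ∃ n : ℤ, s = toETime n ∧ NCAccessible Gs Xf Yt Vtv (F, n) }

/-- A directed path from `a` to `b`, as a list. -/
def IsDirPathFromTo (E : α → α → Prop) (a b : α) (vs : List α) : Prop :=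
  IsDirPathList E vs ∧ vs.head? = some a ∧ vs.getLast? = some b

/-- A collider-free backdoor path from `x` to `y`. -/
def IsColliderFreeBackdoor (E : α → α → Prop) (x y : α) (vs : List α) : Prop :=
  IsPathList E vs ∧ vs.head? = some x ∧ vs.getLast? = some y ∧
  (∃ a, vs[1]? = some a ∧ E a x) ∧ ∀ i, ¬ IsCollider E vs i

/-- The consecutive edges of a list path. -/
def listEdge (vs : List α) (a b : α) : Prop :=
  ∃ i, vs[i]? = some a ∧ vs[i+1]? = some b

/-- `b` has `a` as ancestor via a directed path avoiding `A`. -/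
def AncAvoid (E : α → α → Prop) (A : Set α) (a b : α) : Prop :=
  Relation.ReflTransGen (fun x y => E x y ∧ x ∉ A ∧ y ∉ A) a b

/-- Identifiability by common adjustment. -/
def IdentifiableByCommonAdjustment {V : Type} (Gs : V → V → Prop)
    (Xf : Set (FullVert V)) (Yt : FullVert V) : Prop :=
  ∃ Z : Set (FullVert V), Z ⊆ Set.univ \ (Xf ∪ {Yt}) ∧ CommonAdjustment Gs Xf {Yt} Z


/-!
Add to `π`, for every edge `A → B` of `Gs`, the lagged edge `(A, 0) → (B, 1)`. The reduction is
then exactly `Gs`, and the result stays acyclic: a cycle would have to use a new edge, which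
strictly increases time, whereas no edge of `π` decreases it.
-/

namespace Relation

variable {β : Type*} [Preorder β] {r s : α → α → Prop} {f : α → β}

theorem TransGen.le_of_le (hr : ∀ a b, r a b → f a ≤ f b) {a b : α} (h : TransGen r a b) :
    f a ≤ f b := by
  simpa only [transGen_eq_self] using h.lift f hr

theorem TransGen.or_lt_of_sup (hr : ∀ a b, r a b → f a ≤ f b) (hs : ∀ a b, s a b → f a < f b)
    {a b : α} (h : TransGen (r ⊔ s) a b) : TransGen r a b ∨ f a < f b := by
  induction h with
  | single hab =>
    rcases hab with hab | hab
    · exact .inl (.single hab)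
    · exact .inr (hs _ _ hab)
  | tail _ hbc ih =>
    rcases hbc with hbc | hbc
    · exact ih.imp (·.tail hbc) (·.trans_le (hr _ _ hbc))
    · exact .inr ((ih.elim (·.le_of_le hr) le_of_lt).trans_lt (hs _ _ hbc))

theorem not_transGen_sup_self (hacyc : ∀ a, ¬ TransGen r a a) (hr : ∀ a b, r a b → f a ≤ f b)
    (hs : ∀ a b, s a b → f a < f b) (a : α) : ¬ TransGen (r ⊔ s) a a :=
  fun h => (h.or_lt_of_sup hr hs).elim (hacyc a) (lt_irrefl _)

end Relation

section

variable {V : Type}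

def unitLagEdges (Gs : V → V → Prop) : FullVert V → FullVert V → Prop :=
  fun a b => Gs a.1 b.1 ∧ a.2 = 0 ∧ b.2 = 1

theorem unitLagEdges_lt {Gs : V → V → Prop} (a b : FullVert V) (h : unitLagEdges Gs a b) :
    a.2 < b.2 := by
  obtain ⟨-, ha, hb⟩ := h
  omega

theorem reduction_unitLagEdges (Gs : V → V → Prop) : reduction (unitLagEdges Gs) = Gs :=
  funext₂ fun _ _ => propext ⟨fun ⟨_, _, h, _⟩ => h, fun h => ⟨0, 1, h, rfl, rfl⟩⟩

theorem reduction_sup (E E' : FullVert V → FullVert V → Prop) :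
    reduction (E ⊔ E') = reduction E ⊔ reduction E' :=
  funext₂ fun _ _ => propext <| by simp only [reduction, Pi.sup_apply, sup_Prop_eq, exists_or]

def FTCG.supUnitLag (Gs : V → V → Prop) (π : FullVert V → FullVert V → Prop)
    (hacyc : ∀ v, ¬ Relation.TransGen π v v) (htime : ∀ a b, π a b → a.2 ≤ b.2) : FTCG V where
  E := π ⊔ unitLagEdges Gs
  time_respecting a b := Or.rec (htime a b) fun h => (unitLagEdges_lt a b h).le
  acyclic := Relation.not_transGen_sup_self hacyc htime unitLagEdges_lt

theorem candidate_supUnitLag (Gs : V → V → Prop) (π : FullVert V → FullVert V → Prop)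
    (hacyc : ∀ v, ¬ Relation.TransGen π v v) (htime : ∀ a b, π a b → a.2 ≤ b.2)
    (hsub : ∀ A B, reduction π A B → Gs A B) :
    Candidate Gs (FTCG.supUnitLag Gs π hacyc htime) := by
  rw [Candidate, FTCG.supUnitLag, reduction_sup, reduction_unitLagEdges]
  exact sup_eq_right.mpr hsub

end

theorem stmt0_general {V : Type} (Gs : V → V → Prop)
    (π : FullVert V → FullVert V → Prop)
    (hacyc : ∀ v, ¬ Relation.TransGen π v v)
    (htime : ∀ a b, π a b → a.2 ≤ b.2)
    (hsub : ∀ A B, reduction π A B → Gs A B) :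
    ∃ G : FTCG V, Candidate Gs G ∧ ∀ a b, π a b → G.E a b :=
  ⟨.supUnitLag Gs π hacyc htime, candidate_supUnitLag Gs π hacyc htime hsub,
    fun _ _ => Or.inl⟩

/-- any acyclic, time-respecting graph on `V × ℤ` whose reduction is a
subgraph of the SCG `Gs` extends to a candidate FTCG for `Gs`. -/
theorem stmt0 {V : Type} [Fintype V] (Gs : V → V → Prop) (hGs : IsSCG Gs)
    (π : FullVert V → FullVert V → Prop)
    (hacyc : ∀ v, ¬ Relation.TransGen π v v)
    (htime : ∀ a b, π a b → a.2 ≤ b.2)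
    (hsub : ∀ A B, reduction π A B → Gs A B) :
    ∃ G : FTCG V, Candidate Gs G ∧ ∀ a b, π a b → G.E a b :=
  stmt0_general Gs π hacyc htime hsub
end

section
/- Let G^s be an SCG, X^f = {X^i_{t−γ_i}} a set of interventions, and Y_t the effect, with Y a descendant in G^s of every intervened time series. Then the total effect is identifiable by common adjustment in G^s if and only if for every intervention X^i_{t−γ_i} and every candidate FTCG G^f, G^f does not contain a collider-free backdoor path from X^i_{t−γ_i} to Y_t all of whose vertices lie in NC ∪ {X^i_{t−γ_i}}. Moreover, when this holds, the set C = (V^f ∖ NC) ∖ X^f satisfies the common adjustment criterion relative to X^f and Y_t. -/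
open Classical Relation

variable {α : Type*}

/-!
Necessity: a collider-free backdoor path inside `NC ∪ {x}` is proper and non-causal, and it can
only be blocked at a non-collider, that is at `x ∈ X^f` or in `NC`, which every common adjustment
set avoids.

Sufficiency: without such paths, `CF` is closed under every `Gs`-edge that does not go back in
time, even across candidates. A vertex of `CF` is certified by a proper causal path `P` and a
directed path from `P ∖ X^f` to it, in the candidate whose only same-time edges are those of the
two paths. Such a certificate can follow any of these edges out of its endpoint unless the edge
enters `X^f`, and then the two paths yield a forbidden backdoor path. By this closure a path left
open by `C` has no collider, so it is a collider-free backdoor path inside `NC`. Finally, `C`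
contains `Y_t` only when `Y_t ∉ NC ∪ X^f`; then every intervention precedes `t`, and the
vertices before `t` outside `X^f` form an adjustment set.
-/

open List

theorem listEdge_iff_infix {l : List α} {a b : α} : listEdge l a b ↔ [a, b] <:+: l := by
  rw [infix_iff_getElem?]
  constructor
  · rintro ⟨i, ha, hb⟩
    have := (List.getElem?_eq_some_iff.1 hb).1
    refine ⟨i, by simp only [length_cons, length_nil]; omega, fun j hj => ?_⟩
    match j, hj with
    | 0, _ => simpa using ha
    | 1, _ => simpa [Nat.add_comm] using hb
  · rintro ⟨i, -, h⟩
    exact ⟨i, by simpa using h 0 (by simp), by simpa [Nat.add_comm] using h 1 (by simp)⟩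

theorem isChain_iff_listEdge {r : α → α → Prop} {l : List α} :
    IsChain r l ↔ ∀ a b, listEdge l a b → r a b := by
  simp only [listEdge_iff_infix, isChain_iff_forall_rel_of_append_cons_cons, IsInfix]
  exact ⟨fun h a b ⟨s, t, hst⟩ => h (l₁ := s) (l₂ := t) (by simp [← hst]),
    fun h a b s t hl => h a b ⟨s, t, by simp [hl]⟩⟩

theorem List.IsChain.rel_of_listEdge {r : α → α → Prop} {l : List α} (h : IsChain r l)
    {a b : α} (hab : listEdge l a b) : r a b :=
  isChain_iff_listEdge.1 h a b hab

theorem listEdge.mono {l l' : List α} {a b : α} (h : listEdge l a b) (hl : l <:+: l') :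
    listEdge l' a b :=
  listEdge_iff_infix.2 ((listEdge_iff_infix.1 h).trans hl)

theorem listEdge.left_mem {l : List α} {a b : α} (h : listEdge l a b) : a ∈ l :=
  (listEdge_iff_infix.1 h).subset (by simp)

theorem listEdge_append_singleton {l : List α} {x a b : α} (h : listEdge (l ++ [x]) a b) :
    listEdge l a b ∨ (l.getLast? = some a ∧ b = x) := by
  rw [listEdge_iff_infix, infix_concat_iff, suffix_concat_iff] at h
  rcases h with (h | ⟨t, ht, hs⟩) | h
  · simp at h
  · obtain ⟨rfl, hbx⟩ := append_inj' (s₁ := [a]) (t₁ := [b]) ht rfl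
    exact Or.inr ⟨singleton_suffix_iff_getLast?_eq_some.1 hs, by simpa using hbx⟩
  · exact Or.inl (listEdge_iff_infix.2 h)

theorem List.IsChain.append_singleton {r : α → α → Prop} {l : List α} {b c : α}
    (h : IsChain r l) (hl : l.getLast? = some c) (hcb : r c b) : IsChain r (l ++ [b]) :=
  h.append (.singleton b) (by simp [hl, hcb])

theorem List.IsChain.reflTransGen_of_mem {r : α → α → Prop} {l : List α} {a b : α}
    (h : IsChain r l) (ha : l.head? = some a) (hb : b ∈ l) : ReflTransGen r a b := by
  refine h.induction (ReflTransGen r a) l (fun _ _ h₁ h₂ => h₂.tail h₁) (fun hne => ?_) b hb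
  rw [head?_eq_some_head hne] at ha
  cases ha; rfl

theorem List.IsChain.reflTransGen_of_mem_of_getLast? {r : α → α → Prop} {l : List α}
    {a b : α} (h : IsChain r l) (ha : a ∈ l) (hb : l.getLast? = some b) :
    ReflTransGen r a b := by
  refine h.backwards_induction (ReflTransGen r · b) l (fun _ _ h₁ h₂ => h₂.head h₁)
    (fun hne => ?_) a ha
  rw [getLast?_eq_some_getLast hne] at hb
  cases hb; rfl

theorem List.exists_split_at_last (p : α → Prop) {l : List α} (h : ∃ a ∈ l, p a) :
    ∃ l₁ z l₂, l = l₁ ++ z :: l₂ ∧ p z ∧ ∀ y ∈ l₂, ¬ p y := by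
  induction l with
  | nil => simp at h
  | cons x t ih =>
    by_cases ht : ∃ a ∈ t, p a
    · obtain ⟨l₁, z, l₂, rfl, hz, hl₂⟩ := ih ht
      exact ⟨x :: l₁, z, l₂, rfl, hz, hl₂⟩
    · simp only [not_exists, not_and] at ht
      obtain ⟨a, ha, hpa⟩ := h
      rcases mem_cons.1 ha with rfl | hat
      · exact ⟨[], a, t, rfl, hpa, ht⟩
      · exact absurd hpa (ht a hat)

theorem List.nodup_cons_reverse_append_cons {v z : α} {σ ρ : List α} (hσ : (z :: σ).Nodup)
    (hρ : (z :: ρ).Nodup) (hvσ : v ∉ z :: σ) (hvρ : v ∉ z :: ρ)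
    (hσρ : ∀ a ∈ σ, a ∉ z :: ρ) :
    (v :: σ.reverse ++ z :: ρ).Nodup := by
  refine nodup_cons.2 ⟨?_, nodup_append.2 ⟨nodup_reverse.2 hσ.of_cons, hρ, ?_⟩⟩
  · show v ∉ σ.reverse ++ z :: ρ
    simp only [mem_append, mem_reverse, not_or]
    exact ⟨fun h => hvσ (mem_cons_of_mem z h), hvρ⟩
  · rintro a ha _ hb rfl
    exact hσρ a (mem_reverse.1 ha) hb

theorem isDirPathFromTo_singleton {r : α → α → Prop} (a : α) : IsDirPathFromTo r a a [a] :=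
  ⟨⟨by simp, by simp, .singleton a⟩, rfl, rfl⟩

theorem IsDirPathFromTo.prefix {r : α → α → Prop} {l : List α} {a b c : α}
    (h : IsDirPathFromTo r a b l) (hc : c ∈ l) :
    ∃ l', l' <+: l ∧ IsDirPathFromTo r a c l' := by
  obtain ⟨⟨-, hnd, hch⟩, hh, -⟩ := h
  obtain ⟨l₁, l₂, rfl⟩ := append_of_mem hc
  have hpre : l₁ ++ [c] <+: l₁ ++ c :: l₂ := ⟨l₂, by simp⟩
  exact ⟨_, hpre, ⟨by simp, hnd.sublist hpre.sublist, hch.prefix hpre⟩,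
    by cases l₁ <;> simpa using hh, by simp⟩

theorem not_transGen_self_of_rank {r : α → α → Prop} (f : α → ℕ)
    (hf : ∀ a b, r a b → f a < f b) (a : α) : ¬ TransGen r a a := fun h => by
  have : TransGen (· < ·) (f a) (f a) := TransGen.lift f hf a a h
  rw [transGen_eq_self] at this
  exact lt_irrefl _ this

theorem not_transGen_listEdge_self {l : List α} (hl : l.Nodup) (a : α) :
    ¬ TransGen (listEdge l) a a := by
  refine not_transGen_self_of_rank (l.idxOf ·) (fun a b ⟨i, ha, hb⟩ => ?_) a
  obtain ⟨hi, rfl⟩ := List.getElem?_eq_some_iff.1 ha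
  obtain ⟨hi', rfl⟩ := List.getElem?_eq_some_iff.1 hb
  simp [hl.idxOf_getElem]

theorem not_transGen_adjoin_self {S : α → α → Prop} (hS : ∀ v, ¬ TransGen S v v) {a b : α}
    (hab : a ≠ b) (hb : ∀ c, ¬ S b c) (v : α) :
    ¬ TransGen (fun u w => S u w ∨ (u = a ∧ w = b)) v v := by
  set S' := fun u w => S u w ∨ (u = a ∧ w = b)
  have hb' : ∀ c, ¬ S' b c := fun c h => h.elim (hb c) fun h => hab h.1.symm
  have key : ∀ u w, TransGen S' u w → TransGen S u w ∨ w = b := by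
    intro u w h
    induction h with
    | single h => exact h.imp .single And.right
    | tail _ hcw ih =>
      rcases ih with ih | rfl
      · exact hcw.imp ih.tail And.right
      · exact absurd hcw (hb' _)
  intro h
  rcases key v v h with h' | rfl
  · exact hS v h'
  · obtain ⟨c, hc, -⟩ := TransGen.head'_iff.1 h
    exact hb' c hc

theorem not_transGen_listEdge_append_singleton_self {A B : List α} {e v : α}
    (hS : ∀ u, ¬ TransGen (fun a b => listEdge A a b ∨ listEdge B a b) u u) (hA : v ∉ A)
    (hB : v ∉ B) (he : B.getLast? = some e) (u : α) :
    ¬ TransGen (fun a b => listEdge A a b ∨ listEdge (B ++ [v]) a b) u u := by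
  refine fun h => not_transGen_adjoin_self hS (a := e) (b := v)
    (fun h => hB (h ▸ mem_of_getLast? he)) (fun c h => h.elim (hA ·.left_mem) (hB ·.left_mem))
    u (TransGen.mono (fun a b h => ?_) u u h)
  rcases h with h | h
  · exact Or.inl (Or.inl h)
  rcases listEdge_append_singleton h with h | ⟨ha, rfl⟩
  · exact Or.inl (Or.inr h)
  · rw [he] at ha
    exact Or.inr ⟨(Option.some.inj ha).symm, rfl⟩

theorem forall_getElem?_mem_eq_zero_iff {l : List α} {X : Set α} :
    (∀ i a, l[i]? = some a → a ∈ X → i = 0) ↔ ∀ a ∈ l.tail, a ∉ X := by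
  cases l with
  | nil => simp
  | cons x t =>
    refine ⟨fun h a ha haX => ?_, fun h i a hi haX => ?_⟩
    · obtain ⟨i, hi⟩ := List.mem_iff_getElem?.1 ha
      exact absurd (h (i + 1) a (by simpa using hi) haX) (by omega)
    · cases i with
      | zero => rfl
      | succ i => exact absurd haX (h a (List.mem_of_getElem? (by simpa using hi)))

theorem properPathFromTo_iff {E : α → α → Prop} {X Y : Set α} {l : List α} :
    ProperPathFromTo E X Y l ↔ IsPathList E l ∧ (∃ a ∈ X, l.head? = some a) ∧
      (∃ b ∈ Y, l.getLast? = some b) ∧ ∀ a ∈ l.tail, a ∉ X := by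
  rw [ProperPathFromTo, forall_getElem?_mem_eq_zero_iff]

theorem properPathFromTo_of_isChain {E : α → α → Prop} {X : Set α} {l : List α} {x y : α}
    (hc : IsChain E l) (hnd : l.Nodup) (hx : x ∈ X) (hh : l.head? = some x)
    (hl : l.getLast? = some y) (htail : ∀ a ∈ l.tail, a ∉ X) : ProperPathFromTo E X {y} l :=
  properPathFromTo_iff.2 ⟨⟨by rintro rfl; simp at hh, hnd, hc.imp fun _ _ h => Or.inl h⟩,
    ⟨x, hx, hh⟩, ⟨y, rfl, hl⟩, htail⟩

theorem ProperPathFromTo.of_isChain {E E' : α → α → Prop} {X Y : Set α} {l : List α}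
    (h : ProperPathFromTo E X Y l) (hc : IsChain E' l) : ProperPathFromTo E' X Y l :=
  ⟨⟨h.1.1, h.1.2.1, hc.imp fun _ _ h => Or.inl h⟩, h.2⟩

theorem exists_properPath_of_reflTransGen {E : α → α → Prop} {X : Set α} {x y : α}
    (hx : x ∈ X) (h : ReflTransGen E x y) :
    ∃ l, ProperPathFromTo E X {y} l ∧ IsChain E l := by
  induction h with
  | refl => exact ⟨[x], properPathFromTo_of_isChain (by simp) (by simp) hx rfl rfl (by simp),
      by simp⟩
  | @tail c b _ hcb ih =>
    obtain ⟨l, hp, hc⟩ := ih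
    obtain ⟨hpath, ⟨x', hx', hh⟩, ⟨_, rfl, hl⟩, htail⟩ := properPathFromTo_iff.1 hp
    by_cases hbX : b ∈ X
    · exact ⟨[b], properPathFromTo_of_isChain (by simp) (by simp) hbX rfl rfl (by simp),
        by simp⟩
    by_cases hbl : b ∈ l
    · obtain ⟨l₁, l₂, rfl⟩ := List.append_of_mem hbl
      have hpre : l₁ ++ [b] <+: l₁ ++ b :: l₂ := ⟨l₂, by simp⟩
      refine ⟨l₁ ++ [b], properPathFromTo_of_isChain (hc.prefix hpre)
        (hpath.2.1.sublist hpre.sublist) hx' ?_ (by simp) ?_, hc.prefix hpre⟩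
      · cases l₁ <;> simpa using hh
      · exact fun a ha => htail a (hpre.sublist.tail.subset ha)
    · have hne : l ≠ [] := hpath.1
      have hc' : IsChain E (l ++ [b]) := hc.append_singleton hl hcb
      refine ⟨l ++ [b], properPathFromTo_of_isChain hc' ?_ hx' (by rw [head?_append, hh]; rfl)
        (by simp) ?_, hc'⟩
      · simpa using hpath.2.1.concat hbl
      · simpa [tail_append_of_ne_nil hne] using fun a ha => ha.elim (htail a) (· ▸ hbX)

theorem mem_Forb_self {E : α → α → Prop} {X : Set α} {y d : α} (hd : d ∈ Forb E X {y}) :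
    y ∈ Forb E X {y} := by
  obtain ⟨w, vs, hp, hc, hw, hwX, -⟩ := hd
  obtain ⟨b, hb, hl⟩ := hp.2.2.1
  exact ⟨w, vs, hp, hc, hw, hwX, hb ▸ IsChain.reflTransGen_of_mem_of_getLast? hc hw hl⟩

theorem mem_Forb_of_reflTransGen {E : α → α → Prop} {X : Set α} {x y : α} (hx : x ∈ X)
    (h : ReflTransGen E x y) (hy : y ∉ X) : y ∈ Forb E X {y} := by
  obtain ⟨vs, hp, hc⟩ := exists_properPath_of_reflTransGen hx h
  obtain ⟨b, hb, hl⟩ := hp.2.2.1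
  exact ⟨y, vs, hp, hc, hb ▸ mem_of_getLast? hl, hy, .refl⟩

theorem exists_edge_into_head_of_not_isChain {E : α → α → Prop} {vs : List α} {x : α}
    (hpath : IsChain (fun a b => E a b ∨ E b a) vs) (hnc : ¬ IsChain E vs)
    (hcol : ∀ i, ¬ IsCollider E vs i) (hx : vs.head? = some x) :
    ∃ a, vs[1]? = some a ∧ E a x := by
  obtain ⟨a, b, ⟨i, ha, hb⟩, hab⟩ : ∃ a b, listEdge vs a b ∧ ¬ E a b := by
    simpa [isChain_iff_listEdge] using hnc
  replace hab : E b a := (hpath.rel_of_listEdge ⟨i, ha, hb⟩).resolve_left hab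
  induction i generalizing a b with
  | zero =>
    rw [← head?_eq_getElem?, hx] at ha
    cases ha
    exact ⟨b, hb, hab⟩
  | succ k ih =>
    obtain ⟨a', ha'⟩ : ∃ a', vs[k]? = some a' :=
      Option.isSome_iff_exists.1 (by grind)
    rcases hpath.rel_of_listEdge ⟨k, ha', ha⟩ with h | h
    · exact absurd ⟨a', a, b, by omega, ha', ha, hb, h, hab⟩ (hcol (k + 1))
    · exact ih a' a ha' ha h

/-- Every edge before position `|L|` points backwards and every later one forwards, so no
vertex receives two arrows. -/
theorem not_isCollider_append_cons {E : α → α → Prop} (hE : ∀ a b, E a b → ¬ E b a)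
    {L R : List α} {z : α} (hL : IsChain (fun a b => E b a) (L ++ [z]))
    (hR : IsChain E (z :: R)) (i : ℕ) : ¬ IsCollider E (L ++ z :: R) i := by
  have hback : ∀ j a b, j < L.length → (L ++ z :: R)[j]? = some a →
      (L ++ z :: R)[j + 1]? = some b → E b a := fun j a b hj ha hb => by
    have hj' : j + 1 < (L ++ [z]).length := by simpa using hj
    rw [append_cons, getElem?_append_left (Nat.lt_of_succ_lt hj')] at ha
    rw [append_cons, getElem?_append_left hj'] at hb
    exact hL.rel_of_listEdge ⟨j, ha, hb⟩
  have hfwd : ∀ j a b, L.length ≤ j → (L ++ z :: R)[j]? = some a →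
      (L ++ z :: R)[j + 1]? = some b → E a b := fun j a b hj ha hb => by
    rw [getElem?_append_right hj] at ha
    rw [getElem?_append_right (by omega), Nat.sub_add_comm hj] at hb
    exact hR.rel_of_listEdge ⟨_, ha, hb⟩
  rintro ⟨a, b, c, hi, ha, hb, hc, hab, hcb⟩
  have hiL : i < L.length := by
    by_contra h
    exact hE _ _ hcb (hfwd i b c (by omega) hb hc)
  rw [← Nat.sub_add_cancel hi] at hb
  exact hE _ _ hab (hback (i - 1) a b (by omega) ha hb)

theorem isColliderFreeBackdoor_cons_append_cons {E : α → α → Prop}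
    (hE : ∀ a b, E a b → ¬ E b a) {x y z : α} {L R : List α}
    (hL : IsChain (fun a b => E b a) (x :: L ++ [z])) (hR : IsChain E (z :: R))
    (hnd : (x :: L ++ z :: R).Nodup) (hy : (z :: R).getLast? = some y) :
    IsColliderFreeBackdoor E x y (x :: L ++ z :: R) := by
  refine ⟨⟨by simp, hnd, ?_⟩, rfl, ?_, ?_, not_isCollider_append_cons hE hL hR⟩
  · rw [show x :: L ++ z :: R = (x :: L ++ [z]) ++ R by simp]
    refine (hL.imp fun _ _ h => Or.inr h).append (hR.tail.imp fun _ _ h => Or.inl h) ?_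
    intro u hu v hv
    simp only [getLast?_append, getLast?_singleton, Option.some_or, Option.mem_def,
      Option.some.injEq] at hu
    subst hu
    cases R with
    | nil => simp at hv
    | cons r R =>
      obtain rfl : r = v := by simpa using hv
      exact Or.inl (isChain_cons_cons.1 hR).1
  · rw [show x :: L ++ z :: R = x :: L ++ (z :: R) from rfl, getLast?_append, hy]
    rfl
  · have h1 : (x :: L ++ z :: R)[1]? = (x :: L ++ [z])[1]? := by cases L <;> rfl
    obtain ⟨a, ha⟩ : ∃ a, (x :: L ++ [z])[1]? = some a :=
      Option.isSome_iff_exists.1 (by simp)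
    exact ⟨a, h1.trans ha, hL.rel_of_listEdge ⟨0, rfl, ha⟩⟩

/-- An open collider would have its successor, a non-collider, in `D`, hence all its descendants
in `D ∪ X`: none of them is in `Z = Dᶜ ∖ X`. -/
theorem isColliderFreeBackdoor_of_not_blocksList {E : α → α → Prop}
    (hE : ∀ a b, E a b → ¬ E b a) {X D : Set α} {y : α} {vs : List α}
    (hD : ∀ c ∈ D, ∀ d, Desc E c d → d ∈ D ∪ X) (hp : ProperPathFromTo E X {y} vs)
    (hnc : ¬ vs.Chain' E) (hnb : ¬ BlocksList E ((Set.univ \ D) \ X) vs) :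
    ∃ x ∈ X, IsColliderFreeBackdoor E x y vs ∧ ∀ v ∈ vs, v ∈ D ∪ {x} := by
  obtain ⟨hpath, ⟨x, hx, hhead⟩, ⟨_, rfl, hlast⟩, hproper⟩ := hp
  simp only [BlocksList, not_or, not_exists, not_and, not_forall, not_not] at hnb
  obtain ⟨hnoncol, hcol⟩ := hnb
  have hmem : ∀ i a, vs[i]? = some a → 1 ≤ i → ¬ IsCollider E vs i → a ∈ D := by
    intro i a ha hi hnc
    by_contra haD
    exact hnoncol i a ha hnc
      ⟨⟨trivial, haD⟩, fun haX => absurd (hproper i a ha haX) (by omega)⟩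
  have hnocol : ∀ i, ¬ IsCollider E vs i := by
    rintro i ⟨a, b, c, hi, ha, hb, hc, hab, hcb⟩
    have hc' : ¬ IsCollider E vs (i + 1) := by
      rintro ⟨b', c', -, -, hb', hc', -, hbc, -⟩
      simp only [Nat.add_sub_cancel, hb, hc, Option.some.injEq] at hb' hc'
      subst hb' hc'
      exact hE _ _ hcb hbc
    obtain ⟨d, hbd, hd⟩ := hcol i b hb ⟨a, b, c, hi, ha, hb, hc, hab, hcb⟩
    exact (hD c (hmem (i + 1) c hc (by omega) hc') d (hbd.head hcb)).elim hd.1.2 hd.2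
  refine ⟨x, hx, ⟨hpath, hhead, hlast,
    exists_edge_into_head_of_not_isChain hpath.2.2 hnc hnocol hhead, hnocol⟩, ?_⟩
  intro v hv
  obtain ⟨i, hi⟩ := mem_iff_getElem?.1 hv
  rcases Nat.eq_zero_or_pos i with rfl | hi0
  · rw [← head?_eq_getElem?, hhead] at hi
    cases hi
    exact Or.inr rfl
  · exact Or.inl (hmem i v hi hi0 (hnocol i))

section FTCGs

variable {V : Type} {Gs : V → V → Prop}

theorem FTCG.asymm (G : FTCG V) (a b : FullVert V) (hab : G.E a b) : ¬ G.E b a :=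
  fun hba => G.acyclic a (.head hab (.single hba))

theorem FTCG.time_le_of_reflTransGen (G : FTCG V) {u v : FullVert V}
    (h : ReflTransGen G.E u v) : u.2 ≤ v.2 := by
  induction h with
  | refl => exact le_rfl
  | tail _ h ih => exact ih.trans (G.time_respecting _ _ h)

def AdmissibleEdge (Gs : V → V → Prop) (u v : FullVert V) : Prop :=
  Gs u.1 v.1 ∧ u.2 ≤ v.2

theorem Candidate.admissibleEdge {G : FTCG V} (hG : Candidate Gs G) {u v : FullVert V}
    (h : G.E u v) : AdmissibleEdge Gs u v :=
  ⟨hG ▸ ⟨u.2, v.2, h⟩, G.time_respecting u v h⟩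

theorem Candidate.reflTransGen {G : FTCG V} (hG : Candidate Gs G) {u v : FullVert V}
    (h : ReflTransGen G.E u v) : ReflTransGen (AdmissibleEdge Gs) u v :=
  ReflTransGen.mono (fun _ _ => hG.admissibleEdge) _ _ h

def FTCG.ofSameTime (Gs : V → V → Prop) (S : FullVert V → FullVert V → Prop)
    (hS : ∀ v, ¬ TransGen S v v) : FTCG V where
  E u v := AdmissibleEdge Gs u v ∧ (u.2 = v.2 → S u v)
  time_respecting _ _ h := h.1.2
  acyclic v hv := by
    have key : ∀ a b,
        TransGen (fun u v => AdmissibleEdge Gs u v ∧ (u.2 = v.2 → S u v)) a b →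
        a.2 < b.2 ∨ (a.2 = b.2 ∧ TransGen S a b) := by
      intro a b h
      induction h with
      | single h =>
        rcases h.1.2.lt_or_eq with h' | h'
        · exact Or.inl h'
        · exact Or.inr ⟨h', .single (h.2 h')⟩
      | tail _ h ih =>
        rcases h.1.2.lt_or_eq with h' | h'
        · left; rcases ih with ih | ih <;> omega
        · rcases ih with ih | ⟨ih₁, ih₂⟩
          · left; omega
          · exact Or.inr ⟨ih₁.trans h', ih₂.tail (h.2 h')⟩
    rcases key v v hv with h | h
    · exact lt_irrefl _ h
    · exact hS v h.2

theorem candidate_ofSameTime {S : FullVert V → FullVert V → Prop}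
    (hS : ∀ v, ¬ TransGen S v v) : Candidate Gs (FTCG.ofSameTime Gs S hS) := by
  ext A B
  exact ⟨fun ⟨_, _, h⟩ => h.1.1, fun h => ⟨0, 1, ⟨h, by simp⟩, by simp⟩⟩

theorem isChain_ofSameTime {S : FullVert V → FullVert V → Prop}
    (hS : ∀ v, ¬ TransGen S v v) {l : List (FullVert V)} (hl : IsChain (AdmissibleEdge Gs) l)
    (hlS : ∀ a b, listEdge l a b → S a b) : IsChain (FTCG.ofSameTime Gs S hS).E l :=
  isChain_iff_listEdge.2 fun a b hab => ⟨hl.rel_of_listEdge hab, fun _ => hlS a b hab⟩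

theorem exists_candidate_reflTransGen_sameTime {A B : V} (h : ReflTransGen Gs A B) (τ : ℤ) :
    ∃ G : FTCG V, Candidate Gs G ∧ ReflTransGen G.E (A, τ) (B, τ) := by
  obtain ⟨l, hp, hc⟩ := exists_properPath_of_reflTransGen (Set.mem_singleton A) h
  obtain ⟨⟨-, hnd, -⟩, ⟨_, rfl, hh⟩, ⟨_, rfl, hl⟩, -⟩ := properPathFromTo_iff.1 hp
  set l' := l.map (·, τ)
  have hnd' : l'.Nodup := hnd.map fun _ _ h => congrArg Prod.fst h
  have hc' : IsChain (AdmissibleEdge Gs) l' :=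
    isChain_map _ |>.2 (hc.imp fun _ _ h => ⟨h, le_rfl⟩)
  exact ⟨_, candidate_ofSameTime (not_transGen_listEdge_self hnd'),
    (isChain_ofSameTime _ hc' fun _ _ h => h).reflTransGen_of_mem (by simp [l', hh])
    (by simp [l', mem_of_getLast? hl])⟩

theorem Forb_subset_CF {G : FTCG V} (hG : Candidate Gs G) (Xf : Set (FullVert V))
    (Yt : FullVert V) : Forb G.E Xf {Yt} ⊆ CF Gs Xf Yt :=
  fun _ hd => ⟨G, hG, hd⟩

end FTCGs

section Certificates

variable {V : Type} {Gs : V → V → Prop} {Xf : Set (FullVert V)} {Yt : FullVert V}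

def HasNCBackdoor (Gs : V → V → Prop) (Xf : Set (FullVert V)) (Yt : FullVert V) : Prop :=
  ∃ x ∈ Xf, ∃ G : FTCG V, Candidate Gs G ∧ ∃ vs : List (FullVert V),
    IsColliderFreeBackdoor G.E x Yt vs ∧ ∀ v ∈ vs, v ∈ NCset Gs Xf Yt ∪ {x}

/-- A certificate that `e ∈ CF`, witnessed in `graph`: the candidate whose only same-time edges
are those of `P` and `π`. -/
structure ForbCertificate (Gs : V → V → Prop) (Xf : Set (FullVert V)) (Yt e : FullVert V) where
  P : List (FullVert V)
  π : List (FullVert V)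
  w : FullVert V
  proper : ProperPathFromTo (AdmissibleEdge Gs) Xf {Yt} P
  causal : IsChain (AdmissibleEdge Gs) P
  w_mem : w ∈ P
  dirPath : IsDirPathFromTo (AdmissibleEdge Gs) w e π
  π_disjoint : ∀ v ∈ π, v ∉ Xf
  acyclic : ∀ v, ¬ TransGen (fun a b => listEdge P a b ∨ listEdge π a b) v v

namespace ForbCertificate

variable {e e' : FullVert V}

def graph (C : ForbCertificate Gs Xf Yt e) : FTCG V := FTCG.ofSameTime Gs _ C.acyclic

theorem isChain_P (C : ForbCertificate Gs Xf Yt e) : IsChain C.graph.E C.P :=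
  isChain_ofSameTime _ C.causal fun _ _ h => Or.inl h

theorem isChain_π (C : ForbCertificate Gs Xf Yt e) : IsChain C.graph.E C.π :=
  isChain_ofSameTime _ C.dirPath.1.2.2 fun _ _ h => Or.inr h

theorem mem_CF_of_mem_P (C : ForbCertificate Gs Xf Yt e) {u : FullVert V} (hu : u ∈ C.P)
    (huX : u ∉ Xf) : u ∈ CF Gs Xf Yt :=
  ⟨C.graph, candidate_ofSameTime _, u, C.P, C.proper.of_isChain C.isChain_P, C.isChain_P,
    hu, huX, .refl⟩

theorem mem_CF_of_mem_π (C : ForbCertificate Gs Xf Yt e) {u : FullVert V} (hu : u ∈ C.π) :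
    u ∈ CF Gs Xf Yt :=
  ⟨C.graph, candidate_ofSameTime _, C.w, C.P, C.proper.of_isChain C.isChain_P, C.isChain_P,
    C.w_mem, C.π_disjoint _ (mem_of_head? C.dirPath.2.1),
    C.isChain_π.reflTransGen_of_mem C.dirPath.2.1 hu⟩

def init {G : FTCG V} (hG : Candidate Gs G) {P : List (FullVert V)}
    (hP : ProperPathFromTo G.E Xf {Yt} P) (hPc : IsChain G.E P) {w : FullVert V} (hw : w ∈ P)
    (hwX : w ∉ Xf) : ForbCertificate Gs Xf Yt w where
  P := P
  π := [w]
  w := w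
  proper := hP.of_isChain (hPc.imp fun _ _ => hG.admissibleEdge)
  causal := hPc.imp fun _ _ => hG.admissibleEdge
  w_mem := hw
  dirPath := isDirPathFromTo_singleton w
  π_disjoint := by simpa using hwX
  acyclic v hv := G.acyclic v <| TransGen.mono (fun _ _ h => h.elim hPc.rel_of_listEdge
    fun h => absurd (listEdge_iff_infix.1 h).length_le (by simp)) v v hv

/-- Walking `π` back from `e` to its last vertex `z` on `P`, then along `P` from `z` to `Yt`,
is a collider-free backdoor path from `v` once the edge `e → v` is added. -/
theorem hasNCBackdoor_of_admissibleEdge (C : ForbCertificate Gs Xf Yt e) {v : FullVert V}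
    (hv : v ∈ Xf) (hev : AdmissibleEdge Gs e v) : HasNCBackdoor Gs Xf Yt := by
  obtain ⟨-, -, ⟨_, hYt, hPl⟩, hPtail⟩ := properPathFromTo_iff.1 C.proper
  rw [Set.mem_singleton_iff.1 hYt] at hPl
  obtain ⟨⟨-, hπnd, hπc⟩, hπh, hπl⟩ := C.dirPath
  obtain ⟨σ₁, z, σ, hπ, hzP, hσP⟩ :=
    exists_split_at_last (· ∈ C.P) ⟨C.w, mem_of_head? hπh, C.w_mem⟩
  obtain ⟨ρ₁, ρ, hP⟩ := append_of_mem hzP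
  have hσπ : z :: σ <:+ C.π := hπ ▸ suffix_append _ _
  have hρP : z :: ρ <:+ C.P := hP ▸ suffix_append _ _
  have hzX : z ∉ Xf := C.π_disjoint z (hσπ.subset (by simp))
  have hρX : ∀ u ∈ ρ, u ∉ Xf := fun u hu => hPtail u (by rw [hP]; cases ρ₁ <;> simp [hu])
  have hvσ : v ∉ z :: σ := fun h => C.π_disjoint v (hσπ.subset h) hv
  have hvρ : v ∉ z :: ρ := by
    rintro (_ | ⟨_, h⟩)
    exacts [hzX hv, hρX v h hv]
  have hσe : (z :: σ).getLast? = some e := by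
    rw [hπ, getLast?_append] at hπl; simpa using hπl
  have hacyc := not_transGen_listEdge_append_singleton_self (fun u h => C.acyclic u <|
    TransGen.mono (fun _ _ h => h.imp (·.mono hρP.isInfix) (·.mono hσπ.isInfix)) u u h)
    hvρ hvσ hσe
  set H := FTCG.ofSameTime Gs _ hacyc
  have hHQ : IsChain H.E (z :: σ ++ [v]) :=
    isChain_ofSameTime _ ((hπc.suffix hσπ).append_singleton hσe hev) fun _ _ h => Or.inr h
  have hHR : IsChain H.E (z :: ρ) :=
    isChain_ofSameTime _ (C.causal.suffix hρP) fun _ _ h => Or.inl h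
  refine ⟨v, hv, H, candidate_ofSameTime _, v :: σ.reverse ++ z :: ρ,
    isColliderFreeBackdoor_cons_append_cons H.asymm ?_ hHR ?_ ?_, ?_⟩
  · simpa using (isChain_reverse (R := fun a b => H.E b a)).2 hHQ
  · exact nodup_cons_reverse_append_cons (hπnd.sublist hσπ.sublist)
      (C.proper.1.2.1.sublist hρP.sublist) hvσ hvρ fun a ha hb => hσP a ha (hρP.subset hb)
  · rw [hP, getLast?_append] at hPl
    simpa using hPl
  · intro u hu
    simp only [cons_append, mem_cons, mem_append, mem_reverse] at hu
    rcases hu with rfl | hu | rfl | hu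
    · exact Or.inr rfl
    · exact Or.inl ⟨C.mem_CF_of_mem_π (hσπ.subset (mem_cons_of_mem z hu)),
        C.π_disjoint u (hσπ.subset (mem_cons_of_mem z hu))⟩
    · exact Or.inl ⟨C.mem_CF_of_mem_π (hσπ.subset mem_cons_self), hzX⟩
    · exact Or.inl
        ⟨C.mem_CF_of_mem_P (hρP.subset (mem_cons_of_mem z hu)) (hρX u hu), hρX u hu⟩

theorem nonempty_of_mem_π (C : ForbCertificate Gs Xf Yt e) (h : e' ∈ C.π) :
    Nonempty (ForbCertificate Gs Xf Yt e') := by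
  obtain ⟨π', hpre, hπ'⟩ := C.dirPath.prefix h
  exact ⟨{ C with
    π := π'
    dirPath := hπ'
    π_disjoint := fun v hv => C.π_disjoint v (hpre.subset hv)
    acyclic := fun v hv => C.acyclic v <|
      TransGen.mono (fun _ _ h => h.imp_right (·.mono hpre.isInfix)) v v hv }⟩

theorem nonempty_of_mem_P (C : ForbCertificate Gs Xf Yt e) (h : e' ∈ C.P) (hX : e' ∉ Xf) :
    Nonempty (ForbCertificate Gs Xf Yt e') :=
  ⟨init (candidate_ofSameTime _) (C.proper.of_isChain C.isChain_P) C.isChain_P h hX⟩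

theorem nonempty_of_admissibleEdge (C : ForbCertificate Gs Xf Yt e)
    (h : AdmissibleEdge Gs e e') (hX : e' ∉ Xf) (hπ : e' ∉ C.π) (hP : e' ∉ C.P) :
    Nonempty (ForbCertificate Gs Xf Yt e') := by
  obtain ⟨⟨-, hnd, hc⟩, hh, hl⟩ := C.dirPath
  exact ⟨{ C with
    π := C.π ++ [e']
    dirPath := ⟨⟨by simp, by simpa using hnd.concat hπ, hc.append_singleton hl h⟩,
      by rw [head?_append, hh]; rfl, by simp⟩
    π_disjoint := fun v hv => (mem_append.1 hv).elim (C.π_disjoint v) fun h => by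
      rwa [mem_singleton.1 h]
    acyclic := not_transGen_listEdge_append_singleton_self C.acyclic hP hπ hl }⟩

theorem step (C : ForbCertificate Gs Xf Yt e) (h : AdmissibleEdge Gs e e') :
    Nonempty (ForbCertificate Gs Xf Yt e') ∨ HasNCBackdoor Gs Xf Yt := by
  by_cases hX : e' ∈ Xf
  · exact Or.inr (C.hasNCBackdoor_of_admissibleEdge hX h)
  by_cases hπ : e' ∈ C.π
  · exact Or.inl (C.nonempty_of_mem_π hπ)
  by_cases hP : e' ∈ C.P
  · exact Or.inl (C.nonempty_of_mem_P hP hX)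
  · exact Or.inl (C.nonempty_of_admissibleEdge h hX hπ hP)

theorem reach (C : ForbCertificate Gs Xf Yt e) {d : FullVert V}
    (h : ReflTransGen (AdmissibleEdge Gs) e d) :
    Nonempty (ForbCertificate Gs Xf Yt d) ∨ HasNCBackdoor Gs Xf Yt := by
  induction h with
  | refl => exact Or.inl ⟨C⟩
  | tail _ h ih => exact ih.elim (fun ⟨C'⟩ => C'.step h) Or.inr

end ForbCertificate

theorem mem_CF_of_reflTransGen (hbad : ¬ HasNCBackdoor Gs Xf Yt) {c d : FullVert V}
    (hc : c ∈ CF Gs Xf Yt) (h : ReflTransGen (AdmissibleEdge Gs) c d) : d ∈ CF Gs Xf Yt := by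
  obtain ⟨G, hG, w, P, hP, hPc, hw, hwX, hwc⟩ := hc
  rcases (ForbCertificate.init hG hP hPc hw hwX).reach ((hG.reflTransGen hwc).trans h)
    with ⟨⟨C⟩⟩ | hb
  · exact C.mem_CF_of_mem_π (mem_of_getLast? C.dirPath.2.2)
  · exact absurd hb hbad

theorem commonAdjustment_of_not_hasNCBackdoor (hbad : ¬ HasNCBackdoor Gs Xf Yt) :
    CommonAdjustment Gs Xf {Yt} ((Set.univ \ NCset Gs Xf Yt) \ Xf) := by
  intro G hG
  refine ⟨Set.eq_empty_of_forall_notMem fun d ⟨⟨⟨_, hdNC⟩, hdX⟩, hdF⟩ =>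
    hdNC ⟨Forb_subset_CF hG Xf Yt hdF, hdX⟩, fun vs hp hnc => ?_⟩
  by_contra hnb
  have hD : ∀ c ∈ NCset Gs Xf Yt, ∀ d, Desc G.E c d → d ∈ NCset Gs Xf Yt ∪ Xf := by
    intro c hc d hcd
    by_cases hdX : d ∈ Xf
    · exact Or.inr hdX
    · exact Or.inl ⟨mem_CF_of_reflTransGen hbad hc.1 (hG.reflTransGen hcd), hdX⟩
  obtain ⟨x, hx, hbd, hmem⟩ := isColliderFreeBackdoor_of_not_blocksList G.asymm hD hp hnc hnb
  exact hbad ⟨x, hx, G, hG, vs, hbd, hmem⟩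

theorem not_hasNCBackdoor_of_commonAdjustment {Z : Set (FullVert V)} (hZX : Disjoint Z Xf)
    (hZ : CommonAdjustment Gs Xf {Yt} Z) : ¬ HasNCBackdoor Gs Xf Yt := by
  rintro ⟨x, hx, G, hG, vs, ⟨hpath, hh, hl, ⟨u, hu, hux⟩, hcol⟩, hmem⟩
  have hp : ProperPathFromTo G.E Xf {Yt} vs := by
    refine properPathFromTo_iff.2
      ⟨hpath, ⟨x, hx, hh⟩, ⟨Yt, rfl, hl⟩, fun a ha haX => ?_⟩
    rcases hmem a (mem_of_mem_tail ha) with h | rfl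
    · exact h.2 haX
    · obtain _ | ⟨b, t⟩ := vs
      · simp at hh
      · obtain rfl : b = a := by simpa using hh
        exact (nodup_cons.1 hpath.2.1).1 ha
  have hnc : ¬ vs.Chain' G.E := fun hc =>
    G.asymm _ _ (hc.rel_of_listEdge ⟨0, by rwa [← head?_eq_getElem?], hu⟩) hux
  rcases (hZ G hG).2 vs hp hnc with ⟨i, a, ha, -, haZ⟩ | ⟨i, a, -, hcoli, -⟩
  · rcases hmem a (mem_of_getElem? ha) with ⟨⟨G', hG', haF⟩, -⟩ | rfl
    · exact ((hZ G' hG').1.subset ⟨haZ, haF⟩).elim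
    · exact hZX.notMem_of_mem_left haZ hx
  · exact hcol i hcoli

end Certificates

section Identifiability

variable {V : Type} {Gs : V → V → Prop} {n : ℕ} {X : Fin n → V} {γ : Fin n → ℤ} {Y : V}
  {t : ℤ} {Xf : Set (FullVert V)}

/-- An open backdoor path would enter its intervention, which lies before `t`, from a vertex at
time `≥ t`. -/
theorem identifiable_of_notMem_NCset (hγ : ∀ i, 0 ≤ γ i)
    (hXf : Xf = Set.range fun i => (X i, t - γ i)) (hdesc : ∀ i, ReflTransGen Gs (X i) Y)
    (hYX : (Y, t) ∉ Xf) (hYNC : (Y, t) ∉ NCset Gs Xf (Y, t)) :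
    IdentifiableByCommonAdjustment Gs Xf (Y, t) := by
  have hForb : ∀ G : FTCG V, Candidate Gs G → ∀ d, d ∉ Forb G.E Xf {(Y, t)} :=
    fun G hG d hd => hYNC ⟨Forb_subset_CF hG _ _ (mem_Forb_self hd), hYX⟩
  have htime : ∀ x ∈ Xf, x.2 < t := by
    rw [hXf]
    rintro _ ⟨i, rfl⟩
    refine (sub_le_self t (hγ i)).lt_of_ne fun h => ?_
    obtain ⟨G, hG, hXY⟩ := exists_candidate_reflTransGen_sameTime (hdesc i) t
    have hx : (X i, t) ∈ Xf := hXf ▸ ⟨i, by simp [h]⟩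
    exact hForb G hG _ (mem_Forb_of_reflTransGen hx hXY hYX)
  refine ⟨(Set.univ \ {v | t ≤ v.2}) \ Xf,
    fun v ⟨⟨_, hvt⟩, hvX⟩ => ⟨trivial, ?_⟩, fun G hG => ?_⟩
  · rintro (h | rfl)
    exacts [hvX h, hvt (le_refl t)]
  refine ⟨Set.eq_empty_of_forall_notMem fun d hd => hForb G hG d hd.2, fun vs hp hnc => ?_⟩
  by_contra hnb
  obtain ⟨x, hx, ⟨-, -, -, ⟨u, hu, hux⟩, -⟩, hmem⟩ :=
    isColliderFreeBackdoor_of_not_blocksList G.asymm (D := {v | t ≤ v.2})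
    (fun c hc d hcd => Or.inl (le_trans hc (G.time_le_of_reflTransGen hcd))) hp hnc hnb
  rcases hmem u (mem_of_getElem? hu) with hut | rfl
  · exact absurd ((hut.trans (G.time_respecting _ _ hux)).trans_lt (htime x hx)) (lt_irrefl t)
  · exact G.asymm _ _ hux hux

theorem identifiable_of_not_hasNCBackdoor (hγ : ∀ i, 0 ≤ γ i)
    (hXf : Xf = Set.range fun i => (X i, t - γ i)) (hdesc : ∀ i, ReflTransGen Gs (X i) Y)
    (hbad : ¬ HasNCBackdoor Gs Xf (Y, t)) : IdentifiableByCommonAdjustment Gs Xf (Y, t) := by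
  by_cases hY : (Y, t) ∈ Xf ∨ (Y, t) ∈ NCset Gs Xf (Y, t)
  · refine ⟨_, ?_, commonAdjustment_of_not_hasNCBackdoor hbad⟩
    rintro v ⟨⟨-, hvNC⟩, hvX⟩
    refine ⟨trivial, ?_⟩
    rintro (h | rfl)
    exacts [hvX h, hY.elim hvX hvNC]
  · rw [not_or] at hY
    exact identifiable_of_notMem_NCset hγ hXf hdesc hY.1 hY.2

theorem not_hasNCBackdoor_iff (hXf : Xf = Set.range fun i => (X i, t - γ i))
    (Yt : FullVert V) : ¬ HasNCBackdoor Gs Xf Yt ↔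
      ∀ (i : Fin n) (G : FTCG V), Candidate Gs G →
        ¬ ∃ vs : List (FullVert V), IsColliderFreeBackdoor G.E (X i, t - γ i) Yt vs ∧
          ∀ v ∈ vs, v ∈ NCset Gs Xf Yt ∪ {(X i, t - γ i)} := by
  subst hXf
  simp only [HasNCBackdoor, Set.exists_range_iff, not_exists, not_and]

end Identifiability

theorem stmt3_general {V : Type} (Gs : V → V → Prop)
    (n : ℕ) (X : Fin n → V) (γ : Fin n → ℤ) (hγ : ∀ i, 0 ≤ γ i) (Y : V) (t : ℤ)
    (Xf : Set (FullVert V)) (hXf : Xf = Set.range fun i => (X i, t - γ i))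
    (hdesc : ∀ i, Relation.ReflTransGen Gs (X i) Y) :
    (IdentifiableByCommonAdjustment Gs Xf (Y, t) ↔
      (∀ (i : Fin n) (G : FTCG V), Candidate Gs G →
        ¬ ∃ vs : List (FullVert V),
            IsColliderFreeBackdoor G.E (X i, t - γ i) (Y, t) vs ∧
            ∀ v ∈ vs, v ∈ NCset Gs Xf (Y, t) ∪ {(X i, t - γ i)})) ∧
    ((∀ (i : Fin n) (G : FTCG V), Candidate Gs G →
        ¬ ∃ vs : List (FullVert V),
            IsColliderFreeBackdoor G.E (X i, t - γ i) (Y, t) vs ∧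
            ∀ v ∈ vs, v ∈ NCset Gs Xf (Y, t) ∪ {(X i, t - γ i)}) →
      CommonAdjustment Gs Xf {(Y, t)}
        ((Set.univ \ NCset Gs Xf (Y, t)) \ Xf)) := by
  rw [← not_hasNCBackdoor_iff hXf]
  refine ⟨⟨fun ⟨Z, hZ, hZadj⟩ => ?_, identifiable_of_not_hasNCBackdoor hγ hXf hdesc⟩,
    commonAdjustment_of_not_hasNCBackdoor⟩
  exact not_hasNCBackdoor_of_commonAdjustment
    (Set.disjoint_left.2 fun _ hz hzX => (hZ hz).2 (Or.inl hzX)) hZadj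

/-- the total effect is identifiable by common adjustment iff no candidate
FTCG contains a collider-free backdoor path from an intervention to `Y_t` remaining in
`NC ∪ {that intervention}`; in that case `C = (V^f ∖ NC) ∖ X^f` is a common adjustment
set. -/
theorem stmt3 {V : Type} [Fintype V] (Gs : V → V → Prop) (hGs : IsSCG Gs)
    (n : ℕ) (X : Fin n → V) (γ : Fin n → ℤ) (hγ : ∀ i, 0 ≤ γ i) (Y : V) (t : ℤ)
    (Xf : Set (FullVert V)) (hXf : Xf = Set.range fun i => (X i, t - γ i))
    (hdesc : ∀ i, Relation.ReflTransGen Gs (X i) Y) :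
    (IdentifiableByCommonAdjustment Gs Xf (Y, t) ↔
      (∀ (i : Fin n) (G : FTCG V), Candidate Gs G →
        ¬ ∃ vs : List (FullVert V),
            IsColliderFreeBackdoor G.E (X i, t - γ i) (Y, t) vs ∧
            ∀ v ∈ vs, v ∈ NCset Gs Xf (Y, t) ∪ {(X i, t - γ i)})) ∧
    ((∀ (i : Fin n) (G : FTCG V), Candidate Gs G →
        ¬ ∃ vs : List (FullVert V),
            IsColliderFreeBackdoor G.E (X i, t - γ i) (Y, t) vs ∧
            ∀ v ∈ vs, v ∈ NCset Gs Xf (Y, t) ∪ {(X i, t - γ i)}) →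
      CommonAdjustment Gs Xf {(Y, t)}
        ((Set.univ \ NCset Gs Xf (Y, t)) \ Xf)) :=
  stmt3_general Gs n X γ hγ Y t Xf hXf hdesc
end

section
/- Let G^f be a candidate FTCG for an SCG G^s, with interventions X^f and effect Y_t such that Y_t ∈ CF. Let π be a proper non-causal path in G^f from some X^i_{t−γ_i} ∈ X^f to Y_t that contains at least one vertex outside CF ∪ {X^i_{t−γ_i}}. Then π contains a non-collider vertex belonging to (V^f ∖ NC) ∖ X^f; in particular π is blocked by the set C = (V^f ∖ NC) ∖ X^f. -/
open Classical Relation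

variable {α : Type*}

/-! The last vertex `c` of the path outside `CF ∪ {X^i_{t-γ_i}}` is followed by a vertex `d ∈ CF`,
and `c ∉ X^f` by properness. The edge between them cannot be `c ← d`: `d` is a descendant of a
proper causal path in some candidate `G'`, and rewiring `G'` so that its out-edges at `c` leave an
earlier copy of `c`'s time series, and adding `d → c`, yields another candidate (same reduction,
still acyclic) in which `c` descends from that path, i.e. `c ∈ CF`. So `c` is a non-collider,
and it lies in `(V^f ∖ NC) ∖ X^f`. -/

namespace Relation

variable {β γ : Type*} {R : β → β → Prop}

theorem TransGen.and_eq_of_le [PartialOrder γ] {m : β → γ} (hR : ∀ x y, R x y → m x ≤ m y)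
    {v w : β} (h : TransGen R v w) (hwv : m w ≤ m v) :
    TransGen (fun x y => R x y ∧ m x = m y) v w := by
  have hle : ∀ {x y}, TransGen R x y → m x ≤ m y := fun hxy => by
    simpa only [transGen_eq_self] using TransGen.lift m hR _ _ hxy
  induction h with
  | single hvw => exact .single ⟨hvw, le_antisymm (hR _ _ hvw) hwv⟩
  | @tail x w hvx hxw ih =>
    have hvx' := hle hvx
    have hxw' := hR _ _ hxw
    exact (ih (hxw'.trans hwv)).tail ⟨hxw, le_antisymm hxw' (hwv.trans hvx')⟩

theorem TransGen.of_sup_edge {u v a b : β}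
    (h : TransGen (fun x y => R x y ∨ (x = u ∧ y = v)) a b) :
    TransGen R a b ∨ (ReflTransGen R a u ∧ ReflTransGen R v b) := by
  induction h with
  | single h =>
    rcases h with h | ⟨rfl, rfl⟩
    · exact .inl (.single h)
    · exact .inr ⟨.refl, .refl⟩
  | tail _ hxy ih =>
    rcases hxy with hxy | ⟨rfl, rfl⟩ <;> rcases ih with ih | ⟨hau, hvx⟩
    · exact .inl (ih.tail hxy)
    · exact .inr ⟨hau, hvx.tail hxy⟩
    · exact .inr ⟨ih.to_reflTransGen, .refl⟩
    · exact .inr ⟨hau, .refl⟩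

theorem acyclic_sup_edge (hR : ∀ x, ¬ TransGen R x x) {u v : β} (hvu : ¬ ReflTransGen R v u) :
    ∀ x, ¬ TransGen (fun x y => R x y ∨ (x = u ∧ y = v)) x x := fun x hx =>
  (TransGen.of_sup_edge hx).elim (hR x) fun ⟨hxu, hvx⟩ => hvu (hvx.trans hxu)

theorem ReflTransGen.avoid_or {c w d : β} (h : ReflTransGen R w d) :
    ReflTransGen (fun x y => R x y ∧ x ≠ c) w d ∨ ReflTransGen R w c := by
  induction h with
  | refl => exact .inl .refl
  | @tail x d _ hxd ih =>
    refine ih.elim (fun hwx => ?_) .inr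
    by_cases hxc : x = c
    · exact .inr (hxc ▸ Relation.ReflTransGen.mono (fun _ _ h => h.1) _ _ hwx)
    · exact .inl (hwx.tail ⟨hxd, hxc⟩)

end Relation

theorem List.exists_adjacent_notMem_mem {S : Set α} {y : α} (hy : y ∈ S) :
    ∀ {l : List α}, l.getLast? = some y → (∃ a ∈ l, a ∉ S) →
      ∃ j a b, l[j]? = some a ∧ a ∉ S ∧ l[j + 1]? = some b ∧ b ∈ S
  | [], _, ⟨_, ha, _⟩ => absurd ha List.not_mem_nil
  | [x], hlast, ⟨a, ha, haS⟩ => by simp_all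
  | x :: b :: l, hlast, ⟨a, ha, haS⟩ => by
    by_cases htail : ∃ a ∈ b :: l, a ∉ S
    · obtain ⟨j, h⟩ := exists_adjacent_notMem_mem hy (by simpa using hlast) htail
      exact ⟨j + 1, h⟩
    · push Not at htail
      have hx : a = x := by
        rcases List.mem_cons.mp ha with rfl | h
        · rfl
        · exact absurd (htail a h) haS
      exact ⟨0, x, b, rfl, hx ▸ haS, rfl, htail b (by simp)⟩

theorem not_isCollider_of_not_edge_succ {E : α → α → Prop} {vs : List α} {j : ℕ} {a b : α}
    (ha : vs[j]? = some a) (hb : vs[j + 1]? = some b) (hba : ¬ E b a) : ¬ IsCollider E vs j :=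
  fun ⟨_, a', b', _, _, ha', hb', _, hEb⟩ => by
    rw [ha] at ha'; rw [hb] at hb'
    cases ha'; cases hb'
    exact hba hEb

namespace FTCG

variable {V : Type}

/-- The out-edges `c → y` of `E` are redirected to start at `(c.1, y.2 - 1)`, and an edge `d → c`
is added. Every edge between time series survives, so the reduction is unchanged. -/
def rewireRel (E : FullVert V → FullVert V → Prop) (d c : FullVert V) (x y : FullVert V) : Prop :=
  (E x y ∧ x ≠ c) ∨ (E c y ∧ x = (c.1, y.2 - 1)) ∨ (x = d ∧ y = c)

theorem rewireRel_time_le (G : FTCG V) {d c : FullVert V} (hdc : d.2 ≤ c.2) :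
    ∀ x y, rewireRel G.E d c x y → x.2 ≤ y.2 := by
  rintro x y (⟨h, -⟩ | ⟨-, rfl⟩ | ⟨rfl, rfl⟩)
  · exact G.time_respecting _ _ h
  · exact Int.sub_le_self _ zero_le_one
  · exact hdc

theorem rewireRel_acyclic (G : FTCG V) {d c : FullVert V} (hdc : d.2 ≤ c.2) (hcd : c ≠ d)
    (v : FullVert V) : ¬ TransGen (rewireRel G.E d c) v v := by
  intro hv
  -- a cycle stays at one time, so it uses no redirected edge
  have hlevel := hv.and_eq_of_le (rewireRel_time_le G hdc) le_rfl
  refine acyclic_sup_edge (R := fun x y => G.E x y ∧ x ≠ c) (u := d) (v := c)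
    (fun x hx => G.acyclic x (TransGen.mono (fun _ _ h => h.1) _ _ hx)) ?_ v
    (TransGen.mono (fun x y ⟨h, hxy⟩ => ?_) _ _ hlevel)
  · intro hcd'
    rcases hcd'.cases_head with h | ⟨_, ⟨-, h⟩, -⟩
    exacts [hcd h, h rfl]
  · rcases h with h | ⟨-, rfl⟩ | h
    · exact .inl h
    · exact absurd hxy (by simp)
    · exact .inr h

def rewire (G : FTCG V) (d c : FullVert V) (hdc : d.2 ≤ c.2) (hcd : c ≠ d) : FTCG V :=
  ⟨rewireRel G.E d c, rewireRel_time_le G hdc, rewireRel_acyclic G hdc hcd⟩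

theorem reduction_rewire (G : FTCG V) {d c : FullVert V} (hdc : d.2 ≤ c.2) (hcd : c ≠ d)
    (hred : reduction G.E d.1 c.1) : reduction (G.rewire d c hdc hcd).E = reduction G.E := by
  funext A B
  refine propext ⟨?_, fun ⟨s, s', h⟩ => ?_⟩
  · rintro ⟨s, s', ⟨h, -⟩ | ⟨h, hA⟩ | ⟨hA, hB⟩⟩
    · exact ⟨s, s', h⟩
    · obtain rfl : A = c.1 := congrArg Prod.fst hA
      exact ⟨c.2, s', h⟩
    · subst hA hB
      exact hred
  · by_cases hAc : (A, s) = c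
    · subst hAc
      exact ⟨s' - 1, s', .inr (.inl ⟨h, rfl⟩)⟩
    · exact ⟨s, s', .inl ⟨h, hAc⟩⟩

theorem mem_forb_rewire (G : FTCG V) {d c : FullVert V} (hdc : d.2 ≤ c.2) (hcd : c ≠ d)
    {X Y : Set (FullVert V)} (hd : d ∈ Forb G.E X Y) (hcX : c ∉ X) (hc : c ∉ Forb G.E X Y) :
    c ∈ Forb (G.rewire d c hdc hcd).E X Y := by
  obtain ⟨w, p, hp, hcausal, hwp, hwX, hwd⟩ := hd
  have hcp : c ∉ p := fun hcp => hc ⟨c, p, hp, hcausal, hcp, hcX, .refl⟩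
  have hwd' : ReflTransGen (fun x y => G.E x y ∧ x ≠ c) w d :=
    hwd.avoid_or.resolve_right fun hwc => hc ⟨w, p, hp, hcausal, hwp, hwX, hwc⟩
  have hcausal' : p.IsChain (G.rewire d c hdc hcd).E :=
    List.IsChain.imp_of_mem_imp (fun x _ hx _ h => .inl ⟨h, fun hxc => hcp (hxc ▸ hx)⟩) hcausal
  obtain ⟨⟨hne, hnd, -⟩, hproper⟩ := hp
  refine ⟨w, p, ⟨⟨hne, hnd, hcausal'.imp fun _ _ h => .inl h⟩, hproper⟩, hcausal', hwp, hwX, ?_⟩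
  exact (ReflTransGen.mono (fun _ _ h => .inl h) _ _ hwd').tail (.inr (.inr ⟨rfl, rfl⟩))

end FTCG

theorem mem_CF_of_edge {V : Type} {Gs : V → V → Prop} {Xf : Set (FullVert V)} {Yt : FullVert V}
    {G : FTCG V} (hG : Candidate Gs G) {d c : FullVert V} (hd : d ∈ CF Gs Xf Yt) (hdc : G.E d c)
    (hcX : c ∉ Xf) : c ∈ CF Gs Xf Yt := by
  by_contra hc
  obtain ⟨G', hG', hd'⟩ := hd
  have hcd : c ≠ d := fun h => hc (h ▸ ⟨G', hG', hd'⟩)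
  have hcF : c ∉ Forb G'.E Xf {Yt} := fun h => hc ⟨G', hG', h⟩
  have hred : reduction G'.E d.1 c.1 := hG' ▸ hG ▸ ⟨d.2, c.2, hdc⟩
  have htime := G.time_respecting _ _ hdc
  refine hc ⟨G'.rewire d c htime hcd, ?_, G'.mem_forb_rewire htime hcd hd' hcX hcF⟩
  exact (G'.reduction_rewire htime hcd hred).trans hG'

theorem stmt4_general {V : Type} (Gs : V → V → Prop)
    (n : ℕ) (X : Fin n → V) (γ : Fin n → ℤ) (Y : V) (t : ℤ)
    (Xf : Set (FullVert V))
    (G : FTCG V) (hG : Candidate Gs G)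
    (hYCF : (Y, t) ∈ CF Gs Xf (Y, t))
    (i : Fin n) (vs : List (FullVert V))
    (hπ : ProperPathFromTo G.E Xf {(Y, t)} vs)
    (hhead : vs.head? = some (X i, t - γ i))
    (hout : ∃ v ∈ vs, v ∉ CF Gs Xf (Y, t) ∪ {(X i, t - γ i)}) :
    (∃ (j : ℕ) (a : FullVert V), vs[j]? = some a ∧ ¬ IsCollider G.E vs j ∧
        a ∈ (Set.univ \ NCset Gs Xf (Y, t)) \ Xf) ∧
    BlocksList G.E ((Set.univ \ NCset Gs Xf (Y, t)) \ Xf) vs := by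
  obtain ⟨-, ⟨x₀, hx₀, hhead₀⟩, ⟨y, rfl, hlast⟩, hproper⟩ := hπ
  obtain rfl : x₀ = (X i, t - γ i) := Option.some.inj (hhead₀.symm.trans hhead)
  obtain ⟨j, c, d, hc, hcS, hd, hdS⟩ :=
    List.exists_adjacent_notMem_mem (Set.mem_union_left _ hYCF) hlast hout
  have hdX : d ∉ Xf := fun h => Nat.succ_ne_zero j (hproper _ _ hd h)
  have hdCF : d ∈ CF Gs Xf (Y, t) := hdS.resolve_right fun h => hdX (h ▸ hx₀)
  have hcX : c ∉ Xf := fun h => by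
    obtain rfl := hproper _ _ hc h
    exact hcS (.inr (Option.some.inj (hc.symm.trans (List.head?_eq_getElem? ▸ hhead))))
  have hcCF : c ∉ CF Gs Xf (Y, t) := fun h => hcS (.inl h)
  have hnc : ¬ IsCollider G.E vs j :=
    not_isCollider_of_not_edge_succ hc hd fun hdc => hcCF (mem_CF_of_edge hG hdCF hdc hcX)
  have hcC : c ∈ (Set.univ \ NCset Gs Xf (Y, t)) \ Xf := ⟨⟨trivial, fun h => hcCF h.1⟩, hcX⟩
  exact ⟨⟨j, c, hc, hnc, hcC⟩, .inl ⟨j, c, hc, hnc, hcC⟩⟩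

/-- a proper non-causal path from an intervention to `Y_t` leaving
`CF ∪ {that intervention}` contains a non-collider in `C = (V^f ∖ NC) ∖ X^f`, hence is
blocked by `C`. -/
theorem stmt4 {V : Type} [Fintype V] (Gs : V → V → Prop) (hGs : IsSCG Gs)
    (n : ℕ) (X : Fin n → V) (γ : Fin n → ℤ) (hγ : ∀ i, 0 ≤ γ i) (Y : V) (t : ℤ)
    (Xf : Set (FullVert V)) (hXf : Xf = Set.range fun i => (X i, t - γ i))
    (G : FTCG V) (hG : Candidate Gs G)
    (hYCF : (Y, t) ∈ CF Gs Xf (Y, t))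
    (i : Fin n) (vs : List (FullVert V))
    (hπ : ProperPathFromTo G.E Xf {(Y, t)} vs)
    (hhead : vs.head? = some (X i, t - γ i))
    (hnoncausal : ¬ vs.Chain' G.E)
    (hout : ∃ v ∈ vs, v ∉ CF Gs Xf (Y, t) ∪ {(X i, t - γ i)}) :
    (∃ (j : ℕ) (a : FullVert V), vs[j]? = some a ∧ ¬ IsCollider G.E vs j ∧
        a ∈ (Set.univ \ NCset Gs Xf (Y, t)) \ Xf) ∧
    BlocksList G.E ((Set.univ \ NCset Gs Xf (Y, t)) \ Xf) vs :=
  stmt4_general Gs n X γ Y t Xf G hG hYCF i vs hπ hhead hout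
end

section
/- Let G^s be an SCG with interventions X^f and effect Y_t, and assume no candidate FTCG contains a directed path from Y_t to any intervention remaining in NC ∪ {that intervention}. Then the following are equivalent: (1) there exist an intervention X^i_{t−γ_i}, a vertex F_{t_f}, and a candidate FTCG containing the fork path X^i_{t−γ_i} ⇜ F_{t_f} ⇝ Y_t (two directed paths from F_{t_f}, one to X^i_{t−γ_i} and one to Y_t, intersecting only at F_{t_f}) remaining entirely in NC ∪ {X^i_{t−γ_i}}; (2) there exist an intervention X^i_{t−γ_i} and a vertex F_{t_f} such that F_{t_f} is X^i_{t−γ_i}-NC-accessible and Y_t-NC-accessible. -/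
open Classical Relation

variable {α : Type*}

/-!
(1) ⇒ (2) is immediate: the two branches of a fork are NC-paths. For (2) ⇒ (1), take NC-paths
from `F` to `X^i_{t-γ_i}` in a candidate `G₁` and to `Y_t` in a candidate `G₂`, and let `f` be the
last vertex of the second path lying on the first; by the hypothesis on `Y_t`, `Y_t` is not on the
first path. The two tails from `f` meet only at `f`, so together they form an acyclic
time-respecting graph, and adding one copy of every summary edge at a time later than both paths
turns it into a candidate FTCG containing the fork.
-/

namespace List

theorem exists_cons_suffix_forall_not (P : α → Prop) :
    ∀ {l : List α}, (∃ v ∈ l, P v) → ∃ f t, f :: t <:+ l ∧ P f ∧ ∀ x ∈ t, ¬ P x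
  | [], ⟨_, hv, _⟩ => absurd hv not_mem_nil
  | a :: l, hex => by
    by_cases h : ∃ v ∈ l, P v
    · obtain ⟨f, t, hsuf, hf, ht⟩ := exists_cons_suffix_forall_not P h
      exact ⟨f, t, hsuf.trans (suffix_cons a l), hf, ht⟩
    · push Not at h
      obtain ⟨v, hv, hPv⟩ := hex
      obtain rfl | hv := mem_cons.1 hv
      · exact ⟨v, l, suffix_rfl, hPv, h⟩
      · exact absurd hPv (h v hv)

/-- The common head `f` is the last vertex of `l₂` lying on `l₁`. -/
theorem exists_cons_suffixes_inter_eq_head {l₁ l₂ : List α} {v : α} (h₁ : v ∈ l₁) (h₂ : v ∈ l₂) :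
    ∃ f p q, f :: p <:+ l₁ ∧ f :: q <:+ l₂ ∧ ∀ x, x ∈ f :: p → x ∈ f :: q → x = f := by
  obtain ⟨f, q, hq, hf, hlast⟩ := exists_cons_suffix_forall_not (· ∈ l₁) ⟨v, h₂, h₁⟩
  obtain ⟨pre, p, rfl⟩ := append_of_mem hf
  refine ⟨f, p, q, suffix_append pre _, hq, fun x hx₁ hx₂ => ?_⟩
  obtain rfl | hx₂ := mem_cons.1 hx₂
  · rfl
  · exact absurd (mem_append_right pre hx₁) (hlast x hx₂)

theorem IsChain.nodup_of_acyclic {r : α → α → Prop} {l : List α} (h : l.IsChain r)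
    (hr : ∀ v, ¬ TransGen r v v) : l.Nodup :=
  (h.imp fun _ _ => TransGen.single).pairwise.imp fun hab heq => by subst heq; exact hr _ hab

theorem IsChain.reflTransGen_of_mem_s6 {r : α → α → Prop} {l : List α} {a b : α}
    (h : l.IsChain r) (ha : a ∈ l) (hb : l.getLast? = some b) : ReflTransGen r a b := by
  obtain ⟨pre, post, rfl⟩ := append_of_mem ha
  refine relationReflTransGen_of_exists_isChain_cons post (h.suffix (suffix_append _ _)) ?_
  simpa [getLast?_append, getLast?_eq_some_getLast (cons_ne_nil a post)] using hb

end List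

theorem isChain_listEdge (l : List α) : l.IsChain (listEdge l) :=
  List.isChain_iff_getElem.2 fun i _ =>
    ⟨i, List.getElem?_eq_getElem _, List.getElem?_eq_getElem _⟩

section ListEdge

variable {l : List α} {a b : α}

theorem listEdge.rel_of_isChain {r : α → α → Prop} (h : l.IsChain r) (hab : listEdge l a b) :
    r a b := by
  obtain ⟨i, ha, hb⟩ := hab
  obtain ⟨-, rfl⟩ := List.getElem?_eq_some_iff.1 ha
  obtain ⟨hi, rfl⟩ := List.getElem?_eq_some_iff.1 hb
  exact List.isChain_iff_getElem.1 h i hi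

theorem listEdge.mem_left (hab : listEdge l a b) : a ∈ l :=
  List.mem_of_getElem? hab.choose_spec.1

theorem listEdge.mem_tail (hab : listEdge l a b) : b ∈ l.tail := by
  obtain ⟨i, -, hb⟩ := hab
  exact List.mem_of_getElem? (i := i) (by simpa using hb)

end ListEdge

/-- Once a walk in `r ∨ s` uses an `r`-edge it can never use an `s`-edge again, so a cycle would
lie entirely in `r` or entirely in `s`. -/
theorem acyclic_or {r s : α → α → Prop} (hr : ∀ v, ¬ TransGen r v v)
    (hs : ∀ v, ¬ TransGen s v v) (hrs : ∀ a b c, r a b → ¬ s b c) :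
    ∀ v, ¬ TransGen (fun a b => r a b ∨ s a b) v v := by
  have key : ∀ {a b}, TransGen (fun a b => r a b ∨ s a b) a b →
      TransGen s a b ∨ ∃ c, ReflTransGen s a c ∧ TransGen r c b := by
    intro a b h
    induction h with
    | single h => exact h.elim (fun h => .inr ⟨_, .refl, .single h⟩) (fun h => .inl (.single h))
    | tail _ hbc ih =>
      rcases ih with hab | ⟨c, hac, hcb⟩ <;> rcases hbc with hbc | hbc
      · exact .inr ⟨_, hab.to_reflTransGen, .single hbc⟩
      · exact .inl (hab.tail hbc)
      · exact .inr ⟨c, hac, hcb.tail hbc⟩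
      · obtain ⟨d, -, hdb⟩ := TransGen.tail'_iff.1 hcb
        exact absurd hbc (hrs d _ _ hdb)
  intro v hv
  rcases key hv with h | ⟨c, hvc, hcv⟩
  · exact hs v h
  · obtain ⟨d, -, hdv⟩ := TransGen.tail'_iff.1 hcv
    rcases hvc.cases_head with rfl | ⟨e, hve, -⟩
    · exact hr v hcv
    · exact hrs d v e hdv hve

section DirectedPaths

variable {E : α → α → Prop} {S : Set α} {a b : α} {vs : List α}

theorem DirPathWithin.mem_left (h : DirPathWithin E S a b) : a ∈ S := by
  obtain ⟨c, hac, -⟩ := TransGen.head'_iff.1 h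
  exact hac.2.1

theorem DirPathWithin.exists_isDirPathFromTo (h : DirPathWithin E S a b)
    (hE : ∀ v, ¬ TransGen E v v) :
    ∃ vs, IsDirPathFromTo E a b vs ∧ 2 ≤ vs.length ∧ ∀ v ∈ vs, v ∈ S := by
  obtain ⟨c, hac, hcb⟩ := TransGen.head'_iff.1 h
  obtain ⟨l, hl, hlast⟩ := List.exists_isChain_cons_of_relationReflTransGen hcb
  have hS : (a :: c :: l).IsChain (fun x y => E x y ∧ x ∈ S ∧ y ∈ S) := hl.cons_cons hac
  have hE' : (a :: c :: l).IsChain E := hS.imp fun _ _ h => h.1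
  refine ⟨a :: c :: l, ⟨⟨List.cons_ne_nil _ _, hE'.nodup_of_acyclic hE, hE'⟩, rfl, ?_⟩,
    by simp, hS.induction (· ∈ S) _ (fun _ _ h _ => h.2.2) fun _ => hac.2.1⟩
  rw [List.getLast?_cons_cons, List.getLast?_eq_some_getLast (List.cons_ne_nil _ _), hlast]

theorem IsDirPathFromTo.two_le_length (h : IsDirPathFromTo E a b vs) (hab : a ≠ b) :
    2 ≤ vs.length := by
  obtain ⟨-, ha, hb⟩ := h
  match vs, ha, hb with
  | [_], ha, hb => simp_all
  | _ :: _ :: _, _, _ => simp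

theorem IsDirPathFromTo.head_ne_getLast (h : IsDirPathFromTo E a b vs) (hlen : 2 ≤ vs.length) :
    a ≠ b := by
  obtain ⟨⟨-, hnd, -⟩, ha, hb⟩ := h
  match vs, hlen, hnd, ha, hb with
  | c :: d :: l, _, hnd, ha, hb =>
    rw [List.head?_cons, Option.some_inj] at ha
    rw [List.getLast?_cons_cons] at hb
    subst ha
    rintro rfl
    exact (List.nodup_cons.1 hnd).1 (List.mem_of_getLast? hb)

theorem IsDirPathFromTo.dirPathWithin (h : IsDirPathFromTo E a b vs) (hlen : 2 ≤ vs.length)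
    (hS : ∀ v ∈ vs, v ∈ S) : DirPathWithin E S a b := by
  obtain ⟨⟨-, -, hc⟩, ha, hb⟩ := h
  have hc : vs.IsChain (fun x y => E x y ∧ x ∈ S ∧ y ∈ S) :=
    hc.imp_of_mem_imp fun x y hx hy hxy => ⟨hxy, hS x hx, hS y hy⟩
  match vs, hlen, hc, ha, hb with
  | c :: d :: l, _, hc, ha, hb =>
    rw [List.head?_cons, Option.some_inj] at ha
    rw [List.getLast?_cons_cons] at hb
    subst ha
    obtain ⟨hcd, hc⟩ := List.isChain_cons_cons.1 hc
    exact TransGen.head' hcd (hc.reflTransGen_of_mem_s6 List.mem_cons_self hb)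

theorem IsDirPathFromTo.suffix (h : IsDirPathFromTo E a b vs) {c : α} {l : List α}
    (hs : c :: l <:+ vs) : IsDirPathFromTo E c b (c :: l) := by
  obtain ⟨⟨-, hnd, hc⟩, -, hb⟩ := h
  refine ⟨⟨List.cons_ne_nil _ _, hnd.sublist hs.sublist, hc.suffix hs⟩, rfl, ?_⟩
  obtain ⟨pre, rfl⟩ := hs
  simpa [List.getLast?_append, List.getLast?_eq_some_getLast (List.cons_ne_nil c l)] using hb

end DirectedPaths

/-- The fork path `x ⇜ f ⇝ y` inside `S`. -/
def IsForkWithin (E : α → α → Prop) (S : Set α) (f x y : α) (vs₁ vs₂ : List α) : Prop :=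
  IsDirPathFromTo E f x vs₁ ∧ IsDirPathFromTo E f y vs₂ ∧ 2 ≤ vs₁.length ∧ 2 ≤ vs₂.length ∧
    (∀ v ∈ vs₁, v ∈ S) ∧ (∀ v ∈ vs₂, v ∈ S) ∧ ∀ v, v ∈ vs₁ → v ∈ vs₂ → v = f

theorem IsForkWithin.dirPathWithin {E : α → α → Prop} {S : Set α} {f x y : α}
    {vs₁ vs₂ : List α} (h : IsForkWithin E (S ∪ {x}) f x y vs₁ vs₂) :
    (f ≠ x ∧ DirPathWithin E (S ∪ {x}) f x) ∧ (f ≠ y ∧ DirPathWithin E (S ∪ {y}) f y) := by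
  obtain ⟨h₁, h₂, hl₁, hl₂, hS₁, hS₂, hcommon⟩ := h
  have hfx := h₁.head_ne_getLast hl₁
  refine ⟨⟨hfx, h₁.dirPathWithin hl₁ hS₁⟩, h₂.head_ne_getLast hl₂,
    h₂.dirPathWithin hl₂ fun v hv => ?_⟩
  rcases hS₂ v hv with hv' | rfl
  · exact Or.inl hv'
  · exact absurd (hcommon v (List.mem_of_getLast? h₁.2.2) hv).symm hfx

section Candidates

variable {V : Type} {Gs : V → V → Prop}

theorem Candidate.rel_fst {G : FTCG V} (hG : Candidate Gs G) {a b : FullVert V}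
    (h : G.E a b) : Gs a.1 b.1 :=
  hG ▸ ⟨a.2, b.2, h⟩

/-- Realizing every summary edge once more, between the fresh times `T + 1` and `T + 2`, turns
a time-bounded partial realization into a candidate. -/
theorem exists_candidate_extending {E₀ : FullVert V → FullVert V → Prop}
    (htime : ∀ a b, E₀ a b → a.2 ≤ b.2) (hacyc : ∀ v, ¬ TransGen E₀ v v)
    (hred : ∀ a b, E₀ a b → Gs a.1 b.1) {T : ℤ} (hT : ∀ a b, E₀ a b → b.2 ≤ T) :
    ∃ G : FTCG V, Candidate Gs G ∧ ∀ a b, E₀ a b → G.E a b := by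
  let R : FullVert V → FullVert V → Prop := fun a b => Gs a.1 b.1 ∧ a.2 = T + 1 ∧ b.2 = T + 2
  have hR : ∀ v, ¬ TransGen R v v := fun v hv => by
    have hlt : TransGen (· < ·) v.2 v.2 :=
      TransGen.lift Prod.snd (fun a b (h : R a b) => by simp only [Function.onFun, h.2.1, h.2.2]; omega) _ _ hv
    exact lt_irrefl _ (transGen_eq_self (r := ((· < ·) : ℤ → ℤ → Prop)) ▸ hlt)
  refine ⟨⟨fun a b => E₀ a b ∨ R a b, ?_, acyclic_or hacyc hR ?_⟩, ?_, fun a b h => .inl h⟩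
  · rintro a b (h | ⟨-, ha, hb⟩)
    · exact htime a b h
    · omega
  · rintro a b c hab ⟨-, hb, -⟩
    have := hT a b hab
    omega
  · funext A B
    refine propext ⟨?_, fun h => ⟨T + 1, T + 2, .inr ⟨h, rfl, rfl⟩⟩⟩
    rintro ⟨s, s', h | h⟩
    exacts [hred _ _ h, h.1]

theorem exists_candidate_isChain_and_isChain {G₁ G₂ : FTCG V} (hG₁ : Candidate Gs G₁)
    (hG₂ : Candidate Gs G₂) {l₁ l₂ : List (FullVert V)} (h₁ : l₁.IsChain G₁.E)
    (h₂ : l₂.IsChain G₂.E) (hdisj : ∀ v ∈ l₁.tail, v ∉ l₂) :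
    ∃ G : FTCG V, Candidate Gs G ∧ l₁.IsChain G.E ∧ l₂.IsChain G.E := by
  have hE₁ : ∀ a b, listEdge l₁ a b → G₁.E a b := fun _ _ => listEdge.rel_of_isChain h₁
  have hE₂ : ∀ a b, listEdge l₂ a b → G₂.E a b := fun _ _ => listEdge.rel_of_isChain h₂
  obtain ⟨T, hT⟩ := ((l₁ ++ l₂).finite_toSet.image Prod.snd).bddAbove
  obtain ⟨G, hG, hle⟩ := exists_candidate_extending (Gs := Gs) (T := T)
    (E₀ := fun a b => listEdge l₁ a b ∨ listEdge l₂ a b)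
    (by rintro a b (h | h)
        exacts [G₁.time_respecting a b (hE₁ a b h), G₂.time_respecting a b (hE₂ a b h)])
    (acyclic_or (fun v hv => G₁.acyclic v (TransGen.mono hE₁ _ _ hv))
      (fun v hv => G₂.acyclic v (TransGen.mono hE₂ _ _ hv))
      fun _ b _ hab hbc => hdisj b hab.mem_tail hbc.mem_left)
    (by rintro a b (h | h)
        exacts [hG₁.rel_fst (hE₁ a b h), hG₂.rel_fst (hE₂ a b h)])
    (by rintro a b (h | h) <;> refine hT ⟨b, ?_, rfl⟩
        exacts [List.mem_append_left _ (List.mem_of_mem_tail h.mem_tail),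
          List.mem_append_right _ (List.mem_of_mem_tail h.mem_tail)])
  exact ⟨G, hG, (isChain_listEdge l₁).imp fun a b h => hle a b (.inl h),
    (isChain_listEdge l₂).imp fun a b h => hle a b (.inr h)⟩

theorem exists_fork_of_dirPathWithin {G₁ G₂ : FTCG V} (hG₁ : Candidate Gs G₁)
    (hG₂ : Candidate Gs G₂) {S : Set (FullVert V)} {F x y : FullVert V} (hx : x ∉ S) (hy : y ∈ S)
    (h₁ : DirPathWithin G₁.E (S ∪ {x}) F x) (h₂ : DirPathWithin G₂.E S F y)
    (hyx : ¬ DirPathWithin G₁.E (S ∪ {x}) y x) :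
    ∃ f, ∃ G : FTCG V, Candidate Gs G ∧ ∃ vs₁ vs₂, IsForkWithin G.E (S ∪ {x}) f x y vs₁ vs₂ := by
  obtain ⟨L₁, hL₁, -, hS₁⟩ := h₁.exists_isDirPathFromTo G₁.acyclic
  obtain ⟨L₂, hL₂, -, hS₂⟩ := h₂.exists_isDirPathFromTo G₂.acyclic
  have hyL₁ : y ∉ L₁ := fun hyL₁ => by
    obtain ⟨pre, p, rfl⟩ := List.append_of_mem hyL₁
    have hp := hL₁.suffix (List.suffix_append pre _)
    exact hyx (hp.dirPathWithin (hp.two_le_length fun h => hx (h ▸ hy))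
      fun v hv => hS₁ v (List.mem_append_right pre hv))
  obtain ⟨f, p, q, hp, hq, hcommon⟩ :=
    List.exists_cons_suffixes_inter_eq_head (List.mem_of_mem_head? hL₁.2.1)
      (List.mem_of_mem_head? hL₂.2.1)
  have hf : f ∈ S := hS₂ f (hq.subset List.mem_cons_self)
  have hvs₁ := hL₁.suffix hp
  have hvs₂ := hL₂.suffix hq
  obtain ⟨G, hG, hc₁, hc₂⟩ := exists_candidate_isChain_and_isChain hG₁ hG₂ hvs₁.1.2.2 hvs₂.1.2.2
    fun v hv hv₂ => (List.nodup_cons.1 hvs₁.1.2.1).1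
      (hcommon v (List.mem_cons_of_mem f hv) hv₂ ▸ hv)
  refine ⟨f, G, hG, f :: p, f :: q, ⟨⟨hvs₁.1.1, hvs₁.1.2.1, hc₁⟩, hvs₁.2⟩,
    ⟨⟨hvs₂.1.1, hvs₂.1.2.1, hc₂⟩, hvs₂.2⟩, hvs₁.two_le_length fun h => hx (h ▸ hf),
    hvs₂.two_le_length fun h => hyL₁ (h ▸ hp.subset List.mem_cons_self),
    fun v hv => hS₁ v (hp.subset hv), fun v hv => Or.inl (hS₂ v (hq.subset hv)), hcommon⟩

end Candidates

/-- The effect `Y_t` ends every proper causal path of a candidate, so it is forbidden as soon as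
anything is. -/
theorem target_mem_NCset_of_mem {V : Type} {Gs : V → V → Prop} {Xf : Set (FullVert V)}
    {Yt F : FullVert V} (hF : F ∈ NCset Gs Xf Yt) : Yt ∈ NCset Gs Xf Yt := by
  obtain ⟨⟨G, hG, w, vs, ⟨hpath, hhead, ⟨b, hb, hlast⟩, hfirst⟩, hchain, hw, hwX, -⟩, -⟩ := hF
  rw [Set.mem_singleton_iff] at hb
  subst hb
  have hYt : b ∉ Xf := fun hY => by
    have h0 : vs.length - 1 = 0 := hfirst _ b (List.getLast?_eq_getElem? ▸ hlast) hY
    obtain ⟨c, rfl⟩ := (List.length_eq_one_iff (l := vs)).1 (by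
      have := List.length_pos_iff.2 hpath.1
      omega)
    simp_all
  exact ⟨⟨G, hG, w, vs, ⟨hpath, hhead, ⟨b, rfl, hlast⟩, hfirst⟩, hchain, hw, hwX,
    hchain.reflTransGen_of_mem_s6 hw hlast⟩, hYt⟩

theorem stmt6_general {V : Type} (Gs : V → V → Prop)
    (n : ℕ) (X : Fin n → V) (γ : Fin n → ℤ) (Y : V) (t : ℤ)
    (Xf : Set (FullVert V)) (hXf : Xf = Set.range fun i => (X i, t - γ i))
    (hnb : ∀ (i : Fin n) (G : FTCG V), Candidate Gs G →
      ¬ DirPathWithin G.E (NCset Gs Xf (Y, t) ∪ {(X i, t - γ i)})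
          (Y, t) (X i, t - γ i)) :
    (∃ (i : Fin n) (F : FullVert V) (G : FTCG V), Candidate Gs G ∧
        ∃ vs₁ vs₂ : List (FullVert V),
          IsDirPathFromTo G.E F (X i, t - γ i) vs₁ ∧
          IsDirPathFromTo G.E F (Y, t) vs₂ ∧
          2 ≤ vs₁.length ∧ 2 ≤ vs₂.length ∧
          (∀ v ∈ vs₁, v ∈ NCset Gs Xf (Y, t) ∪ {(X i, t - γ i)}) ∧
          (∀ v ∈ vs₂, v ∈ NCset Gs Xf (Y, t) ∪ {(X i, t - γ i)}) ∧
          (∀ v, v ∈ vs₁ → v ∈ vs₂ → v = F)) ↔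
    (∃ (i : Fin n) (F : FullVert V),
        NCAccessible Gs Xf (Y, t) (X i, t - γ i) F ∧
        NCAccessible Gs Xf (Y, t) (Y, t) F) := by
  constructor
  · rintro ⟨i, F, G, hG, vs₁, vs₂, hfork⟩
    obtain ⟨⟨hFx, hx⟩, hFy, hy⟩ := IsForkWithin.dirPathWithin hfork
    exact ⟨i, F, ⟨hFx, G, hG, hx⟩, hFy, G, hG, hy⟩
  · rintro ⟨i, F, ⟨-, G₁, hG₁, hx⟩, hFy, G₂, hG₂, hy⟩
    have hXi : (X i, t - γ i) ∉ NCset Gs Xf (Y, t) := fun h => h.2 (hXf ▸ ⟨i, rfl⟩)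
    have hYt : (Y, t) ∈ NCset Gs Xf (Y, t) :=
      target_mem_NCset_of_mem (hy.mem_left.resolve_right hFy)
    rw [Set.union_singleton, Set.insert_eq_of_mem hYt] at hy
    obtain ⟨f, G, hG, vs₁, vs₂, hfork⟩ :=
      exists_fork_of_dirPathWithin hG₁ hG₂ hXi hYt hx hy (hnb i G₁ hG₁)
    exact ⟨i, f, G, hG, vs₁, vs₂, hfork⟩

/-- assuming no candidate FTCG has a directed backdoor path from `Y_t` to an
intervention in `NC`, the existence of a fork collider-free backdoor path in some
candidate FTCG is equivalent to double NC-accessibility of some fork vertex. -/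
theorem stmt6 {V : Type} [Fintype V] (Gs : V → V → Prop) (hGs : IsSCG Gs)
    (n : ℕ) (X : Fin n → V) (γ : Fin n → ℤ) (hγ : ∀ i, 0 ≤ γ i) (Y : V) (t : ℤ)
    (Xf : Set (FullVert V)) (hXf : Xf = Set.range fun i => (X i, t - γ i))
    (hnb : ∀ (i : Fin n) (G : FTCG V), Candidate Gs G →
      ¬ DirPathWithin G.E (NCset Gs Xf (Y, t) ∪ {(X i, t - γ i)})
          (Y, t) (X i, t - γ i)) :
    (∃ (i : Fin n) (F : FullVert V) (G : FTCG V), Candidate Gs G ∧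
        ∃ vs₁ vs₂ : List (FullVert V),
          IsDirPathFromTo G.E F (X i, t - γ i) vs₁ ∧
          IsDirPathFromTo G.E F (Y, t) vs₂ ∧
          2 ≤ vs₁.length ∧ 2 ≤ vs₂.length ∧
          (∀ v ∈ vs₁, v ∈ NCset Gs Xf (Y, t) ∪ {(X i, t - γ i)}) ∧
          (∀ v ∈ vs₂, v ∈ NCset Gs Xf (Y, t) ∪ {(X i, t - γ i)}) ∧
          (∀ v, v ∈ vs₁ → v ∈ vs₂ → v = F)) ↔
    (∃ (i : Fin n) (F : FullVert V),
        NCAccessible Gs Xf (Y, t) (X i, t - γ i) F ∧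
        NCAccessible Gs Xf (Y, t) (Y, t) F) :=
  stmt6_general Gs n X γ Y t Xf hXf hnb
end

section
/- Let G^s be an SCG with interventions X^f, let C be a child in G^s of some intervened time series with t_C < +∞, and let S be any time series. Then min { t₁ : S_{t₁} ∈ ∪_{G^f candidate} Desc(C_{t_C}, G^f) ∖ X^f } equals min { t₁ : t₁ ≥ t_C and S_{t₁} ∉ X^f } if S ∈ Desc(C, G^s), and equals +∞ otherwise. -/
open Classical Relation

variable {α : Type*}

/-! A candidate FTCG may realise an SCG edge at any nonnegative lag, provided the lag-0 edges
stay acyclic. Ranking the series by their distance from `C` in the SCG, the lag-0 edges that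
increase the rank already contain a shortest path from `C` to every descendant `S`, so `S_{t_C}`
descends from `C_{t_C}`; moving the last edge of that path to lag `t₁ - t_C` reaches every later
`S_{t₁}`. The one exception is `S = C`, where the minimum is `t_C` itself because
`C_{t_C} ∉ X^f`. Conversely, descendants in a candidate project to descendants in the SCG and
never lie in the past. -/

theorem toETime_le_toETime {a b : ℤ} : toETime a ≤ toETime b ↔ a ≤ b := by
  simp [toETime]

theorem of_toETime_eq_sInf {P : ℤ → Prop} {c : ℤ}
    (h : toETime c = sInf { s : ETime | ∃ t, s = toETime t ∧ P t }) : P c := by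
  have hc_le : ∀ t, P t → c ≤ t := fun t ht =>
    toETime_le_toETime.1 (h ▸ sInf_le ⟨t, rfl, ht⟩)
  by_contra hc
  have hsucc_le : toETime (c + 1) ≤ toETime c := h ▸ le_sInf (by
    rintro _ ⟨t, rfl, ht⟩
    exact toETime_le_toETime.2 (lt_of_le_of_ne (hc_le t ht) (by rintro rfl; exact hc ht)))
  exact absurd (toETime_le_toETime.1 hsucc_le) (by omega)

namespace Relation

def ReachIn (r : α → α → Prop) : ℕ → α → α → Prop
  | 0, a, b => b = a
  | m + 1, a, b => ∃ c, ReachIn r m a c ∧ r c b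

theorem reflTransGen_iff_exists_reachIn {r : α → α → Prop} {a b : α} :
    ReflTransGen r a b ↔ ∃ m, ReachIn r m a b := by
  constructor
  · intro h
    induction h with
    | refl => exact ⟨0, rfl⟩
    | tail _ hcb ih => obtain ⟨m, hm⟩ := ih; exact ⟨m + 1, _, hm, hcb⟩
  · rintro ⟨m, hm⟩
    induction m generalizing b with
    | zero => exact hm ▸ .refl
    | succ m ih => obtain ⟨c, hc, hcb⟩ := hm; exact (ih hc).tail hcb

/-- The length of a shortest `r`-chain from `a` to `b` (junk value `0` if there is none). -/
noncomputable def reachDist (r : α → α → Prop) (a b : α) : ℕ :=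
  if h : ∃ m, ReachIn r m a b then Nat.find h else 0

theorem ReflTransGen.along_reachDist_lt {r : α → α → Prop} {a b : α} (h : ReflTransGen r a b) :
    ReflTransGen (fun x y => r x y ∧ reachDist r a x < reachDist r a y) a b := by
  replace h := reflTransGen_iff_exists_reachIn.1 h
  induction hk : reachDist r a b using Nat.strong_induction_on generalizing b with
  | _ k ih =>
  have hb : ReachIn r k a b := by rw [← hk, reachDist, dif_pos h]; exact Nat.find_spec h
  cases k with
  | zero => exact hb ▸ .refl
  | succ k =>
    obtain ⟨c, hc, hcb⟩ := hb
    have hkc : reachDist r a c ≤ k := by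
      rw [reachDist, dif_pos ⟨k, hc⟩]; exact Nat.find_min' _ hc
    exact (ih _ (by omega) ⟨k, hc⟩ rfl).tail ⟨hcb, by omega⟩

end Relation

section FTCG

variable {V : Type} {Gs : V → V → Prop}

theorem FTCG.time_le_of_desc (G : FTCG V) {p q : FullVert V} (h : Desc G.E p q) :
    p.2 ≤ q.2 := by
  induction h with
  | refl => exact le_rfl
  | tail _ e ih => exact ih.trans (G.time_respecting _ _ e)

theorem Candidate.reflTransGen_of_desc {G : FTCG V} (hG : Candidate Gs G)
    {p q : FullVert V} (h : Desc G.E p q) : ReflTransGen Gs p.1 q.1 :=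
  h.lift Prod.fst fun a b e => hG ▸ ⟨a.2, b.2, e⟩

theorem not_transGen_self_of_map_lt {β : Type*} [Preorder β] {r : α → α → Prop}
    (f : α → β) (hf : ∀ a b, r a b → f a < f b) (a : α) : ¬ TransGen r a a := fun h =>
  lt_irrefl _ (transGen_eq_self (r := (· < · : β → β → Prop)) ▸ h.lift f hf)

def lagFTCG (Gs : V → V → Prop) (d : V → ℕ) : FTCG V where
  E a b := Gs a.1 b.1 ∧ toLex (a.2, d a.1) < toLex (b.2, d b.1)
  time_respecting a b h := by
    rcases Prod.Lex.toLex_lt_toLex.1 h.2 with h | ⟨h, -⟩ <;> omega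
  acyclic := not_transGen_self_of_map_lt (fun a => toLex (a.2, d a.1)) fun _ _ h => h.2

theorem lagFTCG_candidate (d : V → ℕ) : Candidate Gs (lagFTCG Gs d) := by
  funext A B
  exact propext ⟨fun ⟨_, _, h⟩ => h.1,
    fun h => ⟨0, 1, h, Prod.Lex.toLex_lt_toLex.2 (Or.inl zero_lt_one)⟩⟩

theorem desc_lagFTCG_of_rank_lt {d : V → ℕ} {A B : V}
    (h : ReflTransGen (fun x y => Gs x y ∧ d x < d y) A B) (s : ℤ) :
    Desc (lagFTCG Gs d).E (A, s) (B, s) :=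
  h.lift (fun x => (x, s)) fun _ _ hxy =>
    ⟨hxy.1, Prod.Lex.toLex_lt_toLex.2 (Or.inr ⟨rfl, hxy.2⟩)⟩

theorem exists_candidate_desc {C S : V} {s t : ℤ} (hCS : ReflTransGen Gs C S) (hst : s ≤ t)
    (hSC : S = C → t = s) : ∃ G : FTCG V, Candidate Gs G ∧ Desc G.E (C, s) (S, t) := by
  refine ⟨lagFTCG Gs (reachDist Gs C), lagFTCG_candidate _, ?_⟩
  rcases hst.eq_or_lt with rfl | hlt
  · exact desc_lagFTCG_of_rank_lt hCS.along_reachDist_lt s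
  · obtain ⟨c, hCc, hcS⟩ := hCS.cases_tail.resolve_left fun h => hlt.ne (hSC h).symm
    exact (desc_lagFTCG_of_rank_lt hCc.along_reachDist_lt s).tail
      ⟨hcS, Prod.Lex.toLex_lt_toLex.2 (Or.inl hlt)⟩

end FTCG

theorem stmt10_general {V : Type} (Gs : V → V → Prop)
    (n : ℕ) (X : Fin n → V) (γ : Fin n → ℤ) (Y : V) (t : ℤ)
    (Xf : Set (FullVert V))
    (C : V)
    (tc : ℤ)
    (htc : toETime tc = sInf { s : ETime | ∃ t₁ : ℤ, s = toETime t₁ ∧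
        (C, t₁) ∉ Xf ∧ ∃ (i : Fin n) (G : FTCG V), Candidate Gs G ∧
          G.E (X i, t - γ i) (C, t₁) ∧ AncAvoid G.E Xf (C, t₁) (Y, t) })
    (S : V) :
    (Relation.ReflTransGen Gs C S →
      sInf { s : ETime | ∃ t₁ : ℤ, s = toETime t₁ ∧ (S, t₁) ∉ Xf ∧
          ∃ G : FTCG V, Candidate Gs G ∧ Desc G.E (C, tc) (S, t₁) }
        = sInf { s : ETime | ∃ t₁ : ℤ, s = toETime t₁ ∧ tc ≤ t₁ ∧ (S, t₁) ∉ Xf }) ∧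
    (¬ Relation.ReflTransGen Gs C S →
      sInf { s : ETime | ∃ t₁ : ℤ, s = toETime t₁ ∧ (S, t₁) ∉ Xf ∧
          ∃ G : FTCG V, Candidate Gs G ∧ Desc G.E (C, tc) (S, t₁) }
        = ⊤) := by
  have hCtc : (C, tc) ∉ Xf := (of_toETime_eq_sInf htc).1
  refine ⟨fun hCS => le_antisymm ?_ ?_, fun hCS => ?_⟩
  · refine le_sInf ?_
    rintro _ ⟨t₁, rfl, htc_le, hS⟩
    by_cases hSC : S = C
    · exact sInf_le_of_le ⟨tc, rfl, hSC ▸ hCtc, exists_candidate_desc hCS le_rfl fun _ => rfl⟩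
        (toETime_le_toETime.2 htc_le)
    · exact sInf_le ⟨t₁, rfl, hS, exists_candidate_desc hCS htc_le (absurd · hSC)⟩
  · apply sInf_le_sInf
    rintro _ ⟨t₁, rfl, hS, G, -, hdesc⟩
    exact ⟨t₁, rfl, G.time_le_of_desc hdesc, hS⟩
  · refine eq_top_iff.2 (le_sInf ?_)
    rintro _ ⟨t₁, -, -, G, hG, hdesc⟩
    exact absurd (hG.reflTransGen_of_desc hdesc) hCS

/-- first time at which a time series `S` enters the union over candidate
FTCGs of the descendants of `C_{t_C}` (outside the interventions). -/
theorem stmt10 {V : Type} [Fintype V] (Gs : V → V → Prop) (hGs : IsSCG Gs)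
    (n : ℕ) (X : Fin n → V) (γ : Fin n → ℤ) (hγ : ∀ i, 0 ≤ γ i) (Y : V) (t : ℤ)
    (Xf : Set (FullVert V)) (hXf : Xf = Set.range fun i => (X i, t - γ i))
    (C : V) (hC : ∃ i : Fin n, Gs (X i) C)
    (tc : ℤ)
    (htc : toETime tc = sInf { s : ETime | ∃ t₁ : ℤ, s = toETime t₁ ∧
        (C, t₁) ∉ Xf ∧ ∃ (i : Fin n) (G : FTCG V), Candidate Gs G ∧
          G.E (X i, t - γ i) (C, t₁) ∧ AncAvoid G.E Xf (C, t₁) (Y, t) })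
    (S : V) :
    (Relation.ReflTransGen Gs C S →
      sInf { s : ETime | ∃ t₁ : ℤ, s = toETime t₁ ∧ (S, t₁) ∉ Xf ∧
          ∃ G : FTCG V, Candidate Gs G ∧ Desc G.E (C, tc) (S, t₁) }
        = sInf { s : ETime | ∃ t₁ : ℤ, s = toETime t₁ ∧ tc ≤ t₁ ∧ (S, t₁) ∉ Xf }) ∧
    (¬ Relation.ReflTransGen Gs C S →
      sInf { s : ETime | ∃ t₁ : ℤ, s = toETime t₁ ∧ (S, t₁) ∉ Xf ∧
          ∃ G : FTCG V, Candidate Gs G ∧ Desc G.E (C, tc) (S, t₁) }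
        = ⊤) :=
  stmt10_general Gs n X γ Y t Xf C tc htc S
end

section
/- Let G^s be an SCG with interventions X^f, C a child in G^s of some intervened time series with t_C = t−γ_i for a unique intervention X^i (i.e., X^i is the only intervened parent of C in G^s with intervention time ≤ t_C), and S a time series. Then min { t₁ : S_{t₁} ∈ ∪_{G^f candidate} Desc(C_{t_C}, G^f ∖ {X^i_{t−γ_i}}) ∖ X^f } equals: min { t₁ ≥ t_C : S_{t₁} ∉ X^f } if S is a descendant of C in G^s ∖ {X^i}; otherwise min { t₁ ≥ t_C + 1 : S_{t₁} ∉ X^f } if S is a descendant of C in G^s; otherwise +∞. -/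
open Classical Relation

variable {α : Type*}

theorem mem_of_toETime_eq_sInf {P : ℤ → Prop} {n : ℤ}
    (h : toETime n = sInf {s : ETime | ∃ m, s = toETime m ∧ P m}) : P n := by
  by_contra hn
  have hlb : toETime (n + 1) ≤ sInf {s : ETime | ∃ m, s = toETime m ∧ P m} := by
    refine le_sInf ?_
    rintro _ ⟨m, rfl, hm⟩
    have hnm : toETime n ≤ toETime m := h ▸ sInf_le ⟨m, rfl, hm⟩
    rw [toETime_le_toETime] at hnm ⊢
    have : m ≠ n := by rintro rfl; exact hn hm
    omega
  rw [← h, toETime_le_toETime] at hlb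
  omega

theorem sInf_toETime_eq_of_exists_le {P Q : ℤ → Prop} (hPQ : ∀ n, P n → Q n)
    (hQP : ∀ n, Q n → ∃ m, P m ∧ m ≤ n) :
    sInf {s : ETime | ∃ n, s = toETime n ∧ P n} = sInf {s : ETime | ∃ n, s = toETime n ∧ Q n} := by
  apply le_antisymm
  · refine le_sInf ?_
    rintro _ ⟨n, rfl, hn⟩
    obtain ⟨m, hm, hmn⟩ := hQP n hn
    calc sInf {s : ETime | ∃ n, s = toETime n ∧ P n} ≤ toETime m := sInf_le ⟨m, rfl, hm⟩
      _ ≤ toETime n := toETime_le_toETime.2 hmn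
  · refine sInf_le_sInf ?_
    rintro _ ⟨n, hs, hn⟩
    exact ⟨n, hs, hPQ n hn⟩

theorem Relation.ReflTransGen.exists_rank_increasing {r : α → α → Prop} {a b : α}
    (h : ReflTransGen r a b) : ∃ f : α → ℕ, ReflTransGen (fun x y => r x y ∧ f x < f y) a b := by
  induction h using Relation.ReflTransGen.head_induction_on with
  | refl => exact ⟨fun _ => 0, .refl⟩
  | @head a c hac _ ih =>
    obtain ⟨f, hf⟩ := ih
    by_cases hab : ReflTransGen (fun x y => r x y ∧ f x < f y) a b
    · exact ⟨f, hab⟩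
    -- Put `a` below every other vertex; the path from `c` stays increasing since it misses `a`.
    let g : α → ℕ := fun x => if x = a then 0 else f x + 1
    have hmiss : ∀ d, ReflTransGen (fun x y => r x y ∧ f x < f y) d b →
        ReflTransGen (fun x y => r x y ∧ g x < g y) d b := by
      intro d hd
      induction hd using Relation.ReflTransGen.head_induction_on with
      | refl => exact .refl
      | @head d e hde heb ih =>
        have hd : d ≠ a := by rintro rfl; exact hab (.head hde heb)
        have he : e ≠ a := by rintro rfl; exact hab heb
        exact .head ⟨hde.1, by simp [g, hd, he, hde.2]⟩ ih
    have hc : c ≠ a := by rintro rfl; exact hab hf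
    exact ⟨g, .head ⟨hac, by simp [g, hc]⟩ (hmiss c hf)⟩

theorem AncAvoid.reflTransGen {E : α → α → Prop} {A : Set α} {a b : α} (h : AncAvoid E A a b) :
    ReflTransGen E a b :=
  ReflTransGen.mono (fun _ _ h => h.1) _ _ h

namespace FTCG

variable {V : Type}

theorem le_time_of_reflTransGen (G : FTCG V) {a b : FullVert V} (h : ReflTransGen G.E a b) :
    a.2 ≤ b.2 := by
  induction h with
  | refl => exact le_rfl
  | tail _ hbc ih => exact ih.trans (G.time_respecting _ _ hbc)

theorem reflTransGen_reduction {Gs : V → V → Prop} {G : FTCG V} (hG : Candidate Gs G)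
    {a b : FullVert V} (h : ReflTransGen G.E a b) : ReflTransGen Gs a.1 b.1 :=
  h.lift Prod.fst fun x y hxy => hG ▸ ⟨x.2, y.2, hxy⟩

/-- Time is monotone along the path, so all its vertices sit at time `s`. -/
theorem reflTransGen_avoid_of_ancAvoid {Gs : V → V → Prop} {G : FTCG V} (hG : Candidate Gs G)
    {Xi C : V} {s : ℤ} {b : FullVert V} (h : AncAvoid G.E {(Xi, s)} (C, s) b) (hb : b.2 ≤ s) :
    ReflTransGen (fun A B => Gs A B ∧ A ≠ Xi ∧ B ≠ Xi) C b.1 := by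
  induction h with
  | refl => exact .refl
  | @tail c d hCc hcd ih =>
    have hsc : s ≤ c.2 := G.le_time_of_reflTransGen (AncAvoid.reflTransGen hCc)
    have hcd' : c.2 ≤ d.2 := G.time_respecting _ _ hcd.1
    refine (ih (by omega)).tail ⟨hG ▸ ⟨c.2, d.2, hcd.1⟩, ?_, ?_⟩
    · rintro hc; exact hcd.2.1 (Prod.ext hc (by simp; omega))
    · rintro hd; exact hcd.2.2 (Prod.ext hd (by simp; omega))

end FTCG

def lexFTCG {V : Type} (Gs : V → V → Prop) (ord : V → ℕ) : FTCG V where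
  E x y := Gs x.1 y.1 ∧ toLex (x.2, ord x.1) < toLex (y.2, ord y.1)
  time_respecting x y h := by
    rcases Prod.Lex.toLex_lt_toLex.1 h.2 with h | ⟨h, -⟩ <;> simp only at h <;> omega
  acyclic v hv := by
    have := hv.lift (fun x => toLex (x.2, ord x.1)) fun _ _ h => h.2
    rw [Relation.transGen_eq_self] at this
    exact lt_irrefl _ this

theorem candidate_lexFTCG {V : Type} (Gs : V → V → Prop) (ord : V → ℕ) :
    Candidate Gs (lexFTCG Gs ord) := by
  funext A B
  exact propext ⟨fun ⟨_, _, h, _⟩ => h, fun h => ⟨0, 1, h, Prod.Lex.toLex_lt_toLex.2 (by simp)⟩⟩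

theorem lexFTCG_E_iff {V : Type} {Gs : V → V → Prop} {ord : V → ℕ} {a b : V} {s s' : ℤ} :
    (lexFTCG Gs ord).E (a, s) (b, s') ↔ Gs a b ∧ (s < s' ∨ s = s' ∧ ord a < ord b) :=
  and_congr_right' Prod.Lex.toLex_lt_toLex

section Realization

variable {V : Type} {Gs : V → V → Prop} {Xi C S : V} {s m : ℤ}

theorem exists_ancAvoid_of_reflTransGen_avoid
    (h : ReflTransGen (fun A B => Gs A B ∧ A ≠ Xi ∧ B ≠ Xi) C S) (hSC : S ≠ C) (hsm : s ≤ m)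
    (u : ℤ) : ∃ G : FTCG V, Candidate Gs G ∧ AncAvoid G.E {(Xi, u)} (C, s) (S, m) := by
  obtain ⟨ord, hord⟩ := h.exists_rank_increasing
  obtain rfl | ⟨v, ⟨⟨hCv, hC, hv⟩, hord_Cv⟩, hvS⟩ := hord.cases_head
  · exact absurd rfl hSC
  refine ⟨lexFTCG Gs ord, candidate_lexFTCG Gs ord,
    .head (b := (v, m)) ⟨?_, by simp [hC], by simp [hv]⟩ ?_⟩
  · exact lexFTCG_E_iff.2 ⟨hCv, hsm.lt_or_eq.imp_right fun h => ⟨h, hord_Cv⟩⟩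
  · refine hvS.lift (fun x => (x, m)) fun x y ⟨⟨hxy, hx, hy⟩, hord_xy⟩ => ⟨?_, ?_, ?_⟩
    · exact lexFTCG_E_iff.2 ⟨hxy, .inr ⟨rfl, hord_xy⟩⟩
    · simp [hx]
    · simp [hy]

theorem exists_ancAvoid_of_reflTransGen (h : ReflTransGen Gs C S) (hSC : S ≠ C) (hCX : C ≠ Xi)
    (hsm : s < m) : ∃ G : FTCG V, Candidate Gs G ∧ AncAvoid G.E {(Xi, s)} (C, s) (S, m) := by
  obtain ⟨ord, hord⟩ := h.exists_rank_increasing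
  obtain rfl | ⟨v, ⟨hCv, -⟩, hvS⟩ := hord.cases_head
  · exact absurd rfl hSC
  have hm : ∀ x : V, (x, m) ∉ ({(Xi, s)} : Set (FullVert V)) := by simp [hsm.ne']
  refine ⟨lexFTCG Gs ord, candidate_lexFTCG Gs ord, .head ⟨?_, by simp [hCX], hm v⟩ ?_⟩
  · exact lexFTCG_E_iff.2 ⟨hCv, .inl hsm⟩
  · exact hvS.lift (fun x => (x, m)) fun x y ⟨hxy, hord_xy⟩ =>
      ⟨lexFTCG_E_iff.2 ⟨hxy, .inr ⟨rfl, hord_xy⟩⟩, hm x, hm y⟩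

end Realization

theorem stmt11_general {V : Type} (Gs : V → V → Prop)
    (n : ℕ) (X : Fin n → V) (γ : Fin n → ℤ) (Y : V) (t : ℤ)
    (Xf : Set (FullVert V)) (hXf : Xf = Set.range fun i => (X i, t - γ i))
    (C : V) (tc : ℤ)
    (htc : toETime tc = sInf { s : ETime | ∃ t₁ : ℤ, s = toETime t₁ ∧
        (C, t₁) ∉ Xf ∧ ∃ (i : Fin n) (G : FTCG V), Candidate Gs G ∧
          G.E (X i, t - γ i) (C, t₁) ∧ AncAvoid G.E Xf (C, t₁) (Y, t) })
    (i₀ : Fin n) (htime₀ : t - γ i₀ = tc) (S : V) :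
    (Relation.ReflTransGen (fun A B => Gs A B ∧ A ≠ X i₀ ∧ B ≠ X i₀) C S →
      sInf { s : ETime | ∃ t₁ : ℤ, s = toETime t₁ ∧ (S, t₁) ∉ Xf ∧
          ∃ G : FTCG V, Candidate Gs G ∧
            AncAvoid G.E {(X i₀, t - γ i₀)} (C, tc) (S, t₁) }
        = sInf { s : ETime | ∃ t₁ : ℤ, s = toETime t₁ ∧ tc ≤ t₁ ∧ (S, t₁) ∉ Xf }) ∧
    (¬ Relation.ReflTransGen (fun A B => Gs A B ∧ A ≠ X i₀ ∧ B ≠ X i₀) C S →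
      Relation.ReflTransGen Gs C S →
      sInf { s : ETime | ∃ t₁ : ℤ, s = toETime t₁ ∧ (S, t₁) ∉ Xf ∧
          ∃ G : FTCG V, Candidate Gs G ∧
            AncAvoid G.E {(X i₀, t - γ i₀)} (C, tc) (S, t₁) }
        = sInf { s : ETime | ∃ t₁ : ℤ, s = toETime t₁ ∧ tc + 1 ≤ t₁ ∧ (S, t₁) ∉ Xf }) ∧
    (¬ Relation.ReflTransGen Gs C S →
      sInf { s : ETime | ∃ t₁ : ℤ, s = toETime t₁ ∧ (S, t₁) ∉ Xf ∧
          ∃ G : FTCG V, Candidate Gs G ∧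
            AncAvoid G.E {(X i₀, t - γ i₀)} (C, tc) (S, t₁) }
        = ⊤) := by
  rw [htime₀]
  have hCtc : (C, tc) ∉ Xf := (mem_of_toETime_eq_sInf htc).1
  have hCX : C ≠ X i₀ := by
    rintro rfl
    exact hCtc (hXf ▸ ⟨i₀, by simp [htime₀]⟩)
  refine ⟨fun hS => ?_, fun hS hS' => ?_, fun hS => ?_⟩
  · refine sInf_toETime_eq_of_exists_le ?_ ?_
    · rintro t₁ ⟨hSt, G, -, hp⟩
      exact ⟨G.le_time_of_reflTransGen hp.reflTransGen, hSt⟩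
    · rintro m ⟨hm, hSm⟩
      by_cases hSC : S = C
      · subst hSC
        exact ⟨tc, ⟨hCtc, lexFTCG Gs 0, candidate_lexFTCG Gs 0, .refl⟩, hm⟩
      · exact ⟨m, ⟨hSm, exists_ancAvoid_of_reflTransGen_avoid hS hSC hm tc⟩, le_rfl⟩
  · refine sInf_toETime_eq_of_exists_le ?_ fun m hm => ⟨m, ?_, le_rfl⟩
    · rintro t₁ ⟨hSt, G, hG, hp⟩
      have htc₁ : tc ≤ t₁ := G.le_time_of_reflTransGen hp.reflTransGen
      have htc_ne : t₁ ≠ tc := by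
        rintro rfl
        exact hS (FTCG.reflTransGen_avoid_of_ancAvoid hG hp le_rfl)
      exact ⟨by omega, hSt⟩
    · have hSC : S ≠ C := by rintro rfl; exact hS .refl
      exact ⟨hm.2, exists_ancAvoid_of_reflTransGen hS' hSC hCX hm.1⟩
  · refine sInf_eq_top.2 ?_
    rintro _ ⟨t₁, -, -, G, hG, hp⟩
    exact absurd (FTCG.reflTransGen_reduction hG hp.reflTransGen) hS

/-- variant of Statement 10 with the unique same-time intervened parent
`X^{i₀}_{t−γ_{i₀}}` deleted from the graphs. -/
theorem stmt11 {V : Type} [Fintype V] (Gs : V → V → Prop) (hGs : IsSCG Gs)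
    (n : ℕ) (X : Fin n → V) (γ : Fin n → ℤ) (hγ : ∀ i, 0 ≤ γ i) (Y : V) (t : ℤ)
    (Xf : Set (FullVert V)) (hXf : Xf = Set.range fun i => (X i, t - γ i))
    (C : V) (tc : ℤ)
    (htc : toETime tc = sInf { s : ETime | ∃ t₁ : ℤ, s = toETime t₁ ∧
        (C, t₁) ∉ Xf ∧ ∃ (i : Fin n) (G : FTCG V), Candidate Gs G ∧
          G.E (X i, t - γ i) (C, t₁) ∧ AncAvoid G.E Xf (C, t₁) (Y, t) })
    (i₀ : Fin n) (hpar : Gs (X i₀) C) (htime₀ : t - γ i₀ = tc)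
    (huniq : ∀ j : Fin n, Gs (X j) C → t - γ j ≤ tc →
      (X j, t - γ j) = (X i₀, t - γ i₀)) (S : V) :
    (Relation.ReflTransGen (fun A B => Gs A B ∧ A ≠ X i₀ ∧ B ≠ X i₀) C S →
      sInf { s : ETime | ∃ t₁ : ℤ, s = toETime t₁ ∧ (S, t₁) ∉ Xf ∧
          ∃ G : FTCG V, Candidate Gs G ∧
            AncAvoid G.E {(X i₀, t - γ i₀)} (C, tc) (S, t₁) }
        = sInf { s : ETime | ∃ t₁ : ℤ, s = toETime t₁ ∧ tc ≤ t₁ ∧ (S, t₁) ∉ Xf }) ∧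
    (¬ Relation.ReflTransGen (fun A B => Gs A B ∧ A ≠ X i₀ ∧ B ≠ X i₀) C S →
      Relation.ReflTransGen Gs C S →
      sInf { s : ETime | ∃ t₁ : ℤ, s = toETime t₁ ∧ (S, t₁) ∉ Xf ∧
          ∃ G : FTCG V, Candidate Gs G ∧
            AncAvoid G.E {(X i₀, t - γ i₀)} (C, tc) (S, t₁) }
        = sInf { s : ETime | ∃ t₁ : ℤ, s = toETime t₁ ∧ tc + 1 ≤ t₁ ∧ (S, t₁) ∉ Xf }) ∧
    (¬ Relation.ReflTransGen Gs C S →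
      sInf { s : ETime | ∃ t₁ : ℤ, s = toETime t₁ ∧ (S, t₁) ∉ Xf ∧
          ∃ G : FTCG V, Candidate Gs G ∧
            AncAvoid G.E {(X i₀, t - γ i₀)} (C, tc) (S, t₁) }
        = ⊤) :=
  stmt11_general Gs n X γ Y t Xf hXf C tc htc i₀ htime₀ S
end

section
/- Let G^s be an SCG with interventions X^f = {X^i_{t−γ_i}} and effect Y_t. If some candidate FTCG G^f contains a collider-free backdoor path π from an intervention X^i_{t−γ_i} to Y_t all of whose vertices lie in NC ∪ {X^i_{t−γ_i}}, then no set Z ⊆ (V × ℤ) ∖ (X^f ∪ {Y_t}) satisfies the common adjustment criterion relative to X^f and {Y_t} in G^s; i.e., the effect is not identifiable by common adjustment. -/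
open Classical Relation

variable {α : Type*}

/-
A collider-free backdoor path from an intervention `x` to `Y_t` is proper (its only vertex in
`X^f` is `x`) and non-causal (it starts with an edge into `x`, so by acyclicity it is not
directed). Any adjustment set must therefore block it, and with no colliders on it, this means
containing one of its vertices. That vertex is not `x`, so it lies in `NC ⊆ CF`; but it is then
forbidden in some candidate FTCG, which a common adjustment set must avoid.
-/

section Paths

variable {E : α → α → Prop} {x y : α} {vs : List α}

theorem IsColliderFreeBackdoor.not_chain (h : IsColliderFreeBackdoor E x y vs)
    (hacyc : ∀ v, ¬ TransGen E v v) : ¬ vs.IsChain E := by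
  obtain ⟨-, hhead, -, ⟨a, ha, hax⟩, -⟩ := h
  match vs, hhead, ha with
  | x' :: a' :: rest, hhead, ha =>
    obtain rfl : x' = x := by simpa using hhead
    obtain rfl : a' = a := by simpa using ha
    intro hchain
    exact hacyc x' (.head (List.isChain_cons_cons.mp hchain).1 (.single hax))

theorem IsColliderFreeBackdoor.properPathFromTo {X Y : Set α}
    (h : IsColliderFreeBackdoor E x y vs) (hx : x ∈ X) (hy : y ∈ Y)
    (hX : ∀ v ∈ vs, v ∈ X → v = x) : ProperPathFromTo E X Y vs := by
  obtain ⟨hpath, hhead, hlast, -, -⟩ := h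
  refine ⟨hpath, ⟨x, hx, hhead⟩, ⟨y, hy, hlast⟩, fun j v hjv hvX => ?_⟩
  obtain rfl := hX v (List.mem_of_getElem? hjv) hvX
  have hx0 : vs[0]? = some v := List.head?_eq_getElem? ▸ hhead
  exact (List.getElem?_inj (List.getElem?_eq_some_iff.mp hjv).1 hpath.2.1).mp (hjv.trans hx0.symm)

theorem BlocksList.exists_mem_of_forall_not_isCollider {Z : Set α}
    (h : BlocksList E Z vs) (hcol : ∀ i, ¬ IsCollider E vs i) : ∃ v ∈ vs, v ∈ Z := by
  rcases h with ⟨j, v, hjv, -, hvZ⟩ | ⟨j, -, -, hj, -⟩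
  · exact ⟨v, List.mem_of_getElem? hjv, hvZ⟩
  · exact absurd hj (hcol j)

end Paths

theorem CommonAdjustment.disjoint_CF {V : Type} {Gs : V → V → Prop}
    {Xf Z : Set (FullVert V)} {Yt : FullVert V} (h : CommonAdjustment Gs Xf {Yt} Z) :
    Disjoint Z (CF Gs Xf Yt) := by
  rw [Set.disjoint_left]
  rintro v hvZ ⟨G, hG, hvForb⟩
  exact (Set.eq_empty_iff_forall_notMem.mp (h G hG).1) v ⟨hvZ, hvForb⟩

theorem stmt18_general {V : Type} (Gs : V → V → Prop)
    (n : ℕ) (X : Fin n → V) (γ : Fin n → ℤ) (Y : V) (t : ℤ)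
    (Xf : Set (FullVert V)) (hXf : Xf = Set.range fun i => (X i, t - γ i))
    (i : Fin n) (G : FTCG V) (hG : Candidate Gs G)
    (vs : List (FullVert V))
    (hbd : IsColliderFreeBackdoor G.E (X i, t - γ i) (Y, t) vs)
    (hin : ∀ v ∈ vs, v ∈ NCset Gs Xf (Y, t) ∪ {(X i, t - γ i)}) :
    ¬ IdentifiableByCommonAdjustment Gs Xf (Y, t) := by
  rintro ⟨Z, hZsub, hCA⟩
  have hx : (X i, t - γ i) ∈ Xf := hXf ▸ ⟨i, rfl⟩
  have hproper : ProperPathFromTo G.E Xf {(Y, t)} vs :=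
    hbd.properPathFromTo hx rfl fun v hv hvX => (hin v hv).resolve_left fun hNC => hNC.2 hvX
  obtain ⟨v, hv, hvZ⟩ := ((hCA G hG).2 vs hproper (hbd.not_chain G.acyclic))
    |>.exists_mem_of_forall_not_isCollider hbd.2.2.2.2
  rcases hin v hv with hNC | rfl
  · exact hCA.disjoint_CF.notMem_of_mem_left hvZ hNC.1
  · exact (hZsub hvZ).2 (Or.inl hx)

/-- if some candidate FTCG contains a collider-free backdoor path from an
intervention to `Y_t` remaining in `NC ∪ {that intervention}`, then the effect is not
identifiable by common adjustment. -/
theorem stmt18 {V : Type} [Fintype V] (Gs : V → V → Prop) (hGs : IsSCG Gs)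
    (n : ℕ) (X : Fin n → V) (γ : Fin n → ℤ) (hγ : ∀ i, 0 ≤ γ i) (Y : V) (t : ℤ)
    (Xf : Set (FullVert V)) (hXf : Xf = Set.range fun i => (X i, t - γ i))
    (i : Fin n) (G : FTCG V) (hG : Candidate Gs G)
    (vs : List (FullVert V))
    (hbd : IsColliderFreeBackdoor G.E (X i, t - γ i) (Y, t) vs)
    (hin : ∀ v ∈ vs, v ∈ NCset Gs Xf (Y, t) ∪ {(X i, t - γ i)}) :
    ¬ IdentifiableByCommonAdjustment Gs Xf (Y, t) :=
  stmt18_general Gs n X γ Y t Xf hXf i G hG vs hbd hin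
end
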